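/- arXiv:2003.05912 — 4 statements merged into one kernel-verified Lean document; each statement's English description precedes it below -/
import Mathlib

section
/- Suppose F is mixed-monotone with respect to a decomposition function d. Let (x, x̂) : [0, T] → ℝⁿ × ℝⁿ be a solution of the nondeterministic embedding ODE (ẋ, ẋ̂) = (d(x, w, x̂, ŵ), d(x̂, ŵ, x, w)) under piecewise continuous input (w, ŵ) : [0, T] → 𝒲 × 𝒲, and let (y, ŷ) : [0, T] → ℝⁿ × ℝⁿ be a solution of the same ODE under piecewise continuous input (v, v̂) : [0, T] → 𝒲 × 𝒲. If (x(0), x̂(0)) ⪯_SE (y(0), ŷ(0)) and (w(t), ŵ(t)) ⪯_SE (v(t), v̂(t)) for all t ∈ [0, T], then (x(t), x̂(t)) ⪯_SE (y(t), ŷ(t)) for all t ∈ [0, T]. -/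
open Set Function Filter Topology

/-- A function is piecewise continuous on a set `s` if it is continuous on `s` off of
finitely many points. -/
def PiecewiseContinuousOn {α : Type*} [TopologicalSpace α] (w : ℝ → α) (s : Set ℝ) : Prop :=
  ∃ E : Finset ℝ, ContinuousOn w (s \ (E : Set ℝ))

/-- `d` is a decomposition function for the vector field `F` on state space `ℝⁿ` with
disturbance set `𝒲 = Set.Icc wl wu ⊆ ℝᵐ`:  `d` is locally Lipschitz, agrees with `F` on the
diagonal, `dᵢ` is nondecreasing in `xⱼ` for `j ≠ i`, nonincreasing in every component of `x̂`,
nondecreasing in every component of `w` and nonincreasing in every component of `ŵ`. -/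
def IsDecompositionFunction {n m : ℕ} (wl wu : Fin m → ℝ)
    (F : (Fin n → ℝ) → (Fin m → ℝ) → (Fin n → ℝ))
    (d : (Fin n → ℝ) → (Fin m → ℝ) → (Fin n → ℝ) → (Fin m → ℝ) → (Fin n → ℝ)) : Prop :=
  LocallyLipschitz
      (fun p : ((Fin n → ℝ) × (Fin m → ℝ)) × ((Fin n → ℝ) × (Fin m → ℝ)) =>
        d p.1.1 p.1.2 p.2.1 p.2.2)
    ∧ (∀ x : Fin n → ℝ, ∀ w ∈ Set.Icc wl wu, d x w x w = F x w)
    ∧ (∀ (i j : Fin n), j ≠ i → ∀ (x xh : Fin n → ℝ) (s t : ℝ), s ≤ t →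
        ∀ w ∈ Set.Icc wl wu, ∀ wh ∈ Set.Icc wl wu,
          d (Function.update x j s) w xh wh i ≤ d (Function.update x j t) w xh wh i)
    ∧ (∀ (i j : Fin n) (x xh : Fin n → ℝ) (s t : ℝ), s ≤ t →
        ∀ w ∈ Set.Icc wl wu, ∀ wh ∈ Set.Icc wl wu,
          d x w (Function.update xh j t) wh i ≤ d x w (Function.update xh j s) wh i)
    ∧ (∀ (i : Fin n) (k : Fin m) (x xh : Fin n → ℝ) (s t : ℝ),
        wl k ≤ s → s ≤ t → t ≤ wu k →
        ∀ w ∈ Set.Icc wl wu, ∀ wh ∈ Set.Icc wl wu,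
          d x (Function.update w k s) xh wh i ≤ d x (Function.update w k t) xh wh i)
    ∧ (∀ (i : Fin n) (k : Fin m) (x xh : Fin n → ℝ) (s t : ℝ),
        wl k ≤ s → s ≤ t → t ≤ wu k →
        ∀ w ∈ Set.Icc wl wu, ∀ wh ∈ Set.Icc wl wu,
          d x w xh (Function.update wh k t) i ≤ d x w xh (Function.update wh k s) i)

/-!
Let `c ≥ 0` be the largest of `0` and the southeast gaps `xᵢ - yᵢ`, `ŷᵢ - x̂ᵢ` at time `t`. For
a gap attaining `c`, mixed monotonicity of `d` bounds its derivative by the difference between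
the vector field at the shifted point `(y + c, ŷ - c)` and at `(y, ŷ)`, and a Lipschitz constant
`K` of `d` on a compact set around the trajectories bounds that difference by `K c`. So the
upper right Dini derivative of the largest gap is at most `K` times the gap, and Gronwall's
inequality keeps it at `0`.
-/

open Metric
open scoped NNReal

theorem monotoneOn_Icc_of_update {ι α β : Type*} [Fintype ι] [DecidableEq ι] [Preorder α]
    [Preorder β] {φ : (ι → α) → β} {l u : ι → α}
    (h : ∀ k, ∀ z ∈ Icc l u, ∀ s t, l k ≤ s → s ≤ t → t ≤ u k →
      φ (update z k s) ≤ φ (update z k t)) :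
    MonotoneOn φ (Icc l u) := by
  intro a ha b hb hab
  suffices ∀ s : Finset ι, φ a ≤ φ (s.piecewise b a) by simpa using this Finset.univ
  intro s
  induction s using Finset.induction_on with
  | empty => simp
  | insert k s hk ih =>
    set z := s.piecewise b a
    have hz : z ∈ Icc l u := Finset.piecewise_mem_Icc_of_mem_of_mem _ hb ha
    have hzk : update z k (a k) = z := by
      rw [← Finset.piecewise_eq_of_notMem s b a hk]; exact update_eq_self k z
    rw [Finset.piecewise_insert]
    calc φ a ≤ φ z := ih
      _ = φ (update z k (a k)) := by rw [hzk]
      _ ≤ φ (update z k (b k)) := h k z hz _ _ (ha.1 k) (hab k) (hb.2 k)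

theorem antitoneOn_Icc_of_update {ι α β : Type*} [Fintype ι] [DecidableEq ι] [Preorder α]
    [Preorder β] {φ : (ι → α) → β} {l u : ι → α}
    (h : ∀ k, ∀ z ∈ Icc l u, ∀ s t, l k ≤ s → s ≤ t → t ≤ u k →
      φ (update z k t) ≤ φ (update z k s)) :
    AntitoneOn φ (Icc l u) :=
  monotoneOn_Icc_of_update (β := βᵒᵈ) h

theorem eventually_slope_finset_sup'_lt {ι : Type*} {s : Finset ι} (hs : s.Nonempty)
    {u : ι → ℝ → ℝ} {u' : ι → ℝ} {t r : ℝ}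
    (hu : ∀ i ∈ s, HasDerivWithinAt (u i) (u' i) (Ici t) t)
    (hr : ∀ i ∈ s, u i t = s.sup' hs (u · t) → u' i < r) :
    ∀ᶠ z in 𝓝[>] t, slope (fun z => s.sup' hs (u · z)) t z < r := by
  have hbelow : ∀ i ∈ s, ∀ᶠ z in 𝓝[>] t, u i z - r * (z - t) < s.sup' hs (u · t) := by
    intro i hi
    rcases (s.le_sup' (u · t) hi).eq_or_lt with hmax | hlt
    · filter_upwards [(hu i hi).Ioi_of_Ici.limsup_slope_le' (lt_irrefl t) (hr i hi hmax),
        self_mem_nhdsWithin] with z hz hzt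
      rw [slope_def_field, div_lt_iff₀ (sub_pos.2 hzt)] at hz
      linarith
    · have hcont : ContinuousWithinAt (fun z => u i z - r * (z - t)) (Ioi t) t :=
        ((hu i hi).continuousWithinAt.mono Ioi_subset_Ici_self).sub (by fun_prop)
      exact hcont.eventually_lt continuousWithinAt_const
        (by simpa only [sub_self, mul_zero, sub_zero] using hlt)
  filter_upwards [(eventually_all_finset s).2 hbelow, self_mem_nhdsWithin] with z hz hzt
  rw [slope_def_field, div_lt_iff₀ (sub_pos.2 hzt), sub_lt_iff_lt_add', Finset.sup'_lt_iff]
  exact fun i hi => by linarith [hz i hi]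

theorem nonpos_of_hasDerivWithinAt_le_mul_at_max {ι : Type*} [Fintype ι] [Nonempty ι]
    {u u' : ι → ℝ → ℝ} {K a b : ℝ} (hcont : ∀ i, ContinuousOn (u i) (Icc a b))
    (hderiv : ∀ i, ∀ t ∈ Ico a b, HasDerivWithinAt (u i) (u' i t) (Ici t) t)
    (hmax : ∀ t ∈ Ico a b, ∀ i, (∀ j, u j t ≤ u i t) → u' i t ≤ K * u i t)
    (ha : ∀ i, u i a ≤ 0) :
    ∀ t ∈ Icc a b, ∀ i, u i t ≤ 0 := by
  set f : ℝ → ℝ := fun t => Finset.univ.sup' Finset.univ_nonempty (u · t)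
  have hdini : ∀ t ∈ Ico a b, ∀ r, K * f t < r → ∃ᶠ z in 𝓝[>] t, slope f t z < r := by
    refine fun t ht r hr => (eventually_slope_finset_sup'_lt _ (fun i _ => hderiv i t ht)
      fun i _ hi => (hmax t ht i fun j => ?_).trans_lt (hi ▸ hr)).frequently
    exact hi ▸ Finset.le_sup' (u · t) (Finset.mem_univ j)
  have hf : ∀ t ∈ Icc a b, f t ≤ 0 := by
    simpa only [gronwallBound_ε0_δ0] using le_gronwallBound_of_liminf_deriv_right_le
      (ContinuousOn.finset_sup'_apply _ fun i _ => hcont i) hdini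
      (Finset.sup'_le _ _ fun i _ => ha i) (fun _ _ => (add_zero _).ge)
  exact fun t ht i => (Finset.le_sup' (u · t) (Finset.mem_univ i)).trans (hf t ht)

theorem nonpos_of_hasDerivWithinAt_le_mul_at_nonneg_max {ι : Type*} [Fintype ι]
    {u u' : ι → ℝ → ℝ} {K a b : ℝ} (hcont : ∀ i, ContinuousOn (u i) (Icc a b))
    (hderiv : ∀ i, ∀ t ∈ Ico a b, HasDerivWithinAt (u i) (u' i t) (Ici t) t)
    (hmax : ∀ t ∈ Ico a b, ∀ i, 0 ≤ u i t → (∀ j, u j t ≤ u i t) → u' i t ≤ K * u i t)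
    (ha : ∀ i, u i a ≤ 0) :
    ∀ t ∈ Icc a b, ∀ i, u i t ≤ 0 := by
  have key := nonpos_of_hasDerivWithinAt_le_mul_at_max (K := K)
    (u := fun j : Option ι => j.elim 0 u) (u' := fun j => j.elim 0 u')
    (by rintro (_ | i); exacts [continuousOn_const, hcont i])
    (by rintro (_ | i) t ht; exacts [hasDerivWithinAt_const _ _ _, hderiv i t ht])
    (by
      rintro t ht (_ | i) hi
      · simp
      · exact hmax t ht i (hi none) fun j => hi (some j))
    (by rintro (_ | i); exacts [le_rfl, ha i])
  exact fun t ht i => key t ht (some i)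

section Decomposition

variable {n m : ℕ} {wl wu : Fin m → ℝ} {F : (Fin n → ℝ) → (Fin m → ℝ) → (Fin n → ℝ)}
  {d : (Fin n → ℝ) → (Fin m → ℝ) → (Fin n → ℝ) → (Fin m → ℝ) → (Fin n → ℝ)}

theorem IsDecompositionFunction.apply_le_apply (hd : IsDecompositionFunction wl wu F d)
    {i : Fin n} {x x' xh xh' : Fin n → ℝ} {w w' wh wh' : Fin m → ℝ}
    (hx : x ≤ x') (hxi : x i = x' i) (hxh : xh' ≤ xh)
    (hw : w ∈ Icc wl wu) (hw' : w' ∈ Icc wl wu) (hwh : wh ∈ Icc wl wu)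
    (hwh' : wh' ∈ Icc wl wu) (hww : w ≤ w') (hwhwh : wh' ≤ wh) :
    d x w xh wh i ≤ d x' w' xh' wh' i := by
  obtain ⟨-, -, hmono_x, hanti_xh, hmono_w, hanti_wh⟩ := hd
  calc d x w xh wh i
      ≤ d x' w xh wh i := by
        refine monotoneOn_Icc_of_update (φ := fun z => d z w xh wh i)
          (fun k z _ s t hs hst ht => ?_) (left_mem_Icc.2 hx) (right_mem_Icc.2 hx) hx
        rcases eq_or_ne k i with rfl | hk
        · rw [le_antisymm hst (ht.trans (hxi ▸ hs))]
        · exact hmono_x i k hk z xh s t hst w hw wh hwh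
    _ ≤ d x' w xh' wh i :=
        antitoneOn_Icc_of_update (φ := fun z => d x' w z wh i)
          (fun k z _ s t _ hst _ => hanti_xh i k x' z s t hst w hw wh hwh)
          (left_mem_Icc.2 hxh) (right_mem_Icc.2 hxh) hxh
    _ ≤ d x' w' xh' wh i :=
        monotoneOn_Icc_of_update (φ := fun z => d x' z xh' wh i)
          (fun k z hz s t hs hst ht => hmono_w i k x' xh' s t hs hst ht z hz wh hwh) hw hw' hww
    _ ≤ d x' w' xh' wh' i :=
        antitoneOn_Icc_of_update (φ := fun z => d x' w' xh' z i)
          (fun k z hz s t hs hst ht => hanti_wh i k x' xh' s t hs hst ht w' hw' z hz)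
          hwh' hwh hwhwh

theorem IsDecompositionFunction.apply_sub_apply_le_of_lipschitzOnWith
    (hd : IsDecompositionFunction wl wu F d) {K : ℝ≥0} {R : ℝ}
    (hK : LipschitzOnWith K
      (fun p : ((Fin n → ℝ) × (Fin m → ℝ)) × ((Fin n → ℝ) × (Fin m → ℝ)) =>
        d p.1.1 p.1.2 p.2.1 p.2.2)
      ((closedBall 0 (3 * R) ×ˢ Icc wl wu) ×ˢ (closedBall 0 (3 * R) ×ˢ Icc wl wu)))
    {i : Fin n} {x xh y yh : Fin n → ℝ} {w wh v vh : Fin m → ℝ} {c : ℝ}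
    (hxR : ‖x‖ ≤ R) (hyR : ‖y‖ ≤ R) (hyhR : ‖yh‖ ≤ R)
    (hxy : x - y ≤ const (Fin n) c) (hxyi : x i - y i = c) (hyxh : yh - xh ≤ const (Fin n) c)
    (hw : w ∈ Icc wl wu) (hwh : wh ∈ Icc wl wu) (hv : v ∈ Icc wl wu) (hvh : vh ∈ Icc wl wu)
    (hwv : w ≤ v) (hvwh : vh ≤ wh) (hc : 0 ≤ c) :
    d x w xh wh i - d y v yh vh i ≤ K * c := by
  have hconst : ‖const (Fin n) c‖ ≤ c := (pi_norm_const_le c).trans (Real.norm_of_nonneg hc).le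
  have hc2R : c ≤ 2 * R := by
    have := (Real.le_norm_self _).trans ((norm_le_pi_norm (x - y) i).trans (norm_sub_le x y))
    rw [Pi.sub_apply, hxyi] at this
    linarith
  have hshift : ((y + const (Fin n) c, v), (yh - const (Fin n) c, vh)) ∈
      (closedBall 0 (3 * R) ×ˢ Icc wl wu) ×ˢ (closedBall 0 (3 * R) ×ˢ Icc wl wu) := by
    refine ⟨⟨?_, hv⟩, ⟨?_, hvh⟩⟩ <;> rw [mem_closedBall_zero_iff]
    · linarith [norm_add_le y (const (Fin n) c)]
    · linarith [norm_sub_le yh (const (Fin n) c)]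
  have hbase : ((y, v), (yh, vh)) ∈
      (closedBall 0 (3 * R) ×ˢ Icc wl wu) ×ˢ (closedBall 0 (3 * R) ×ˢ Icc wl wu) := by
    refine ⟨⟨?_, hv⟩, ⟨?_, hvh⟩⟩ <;> rw [mem_closedBall_zero_iff] <;> linarith
  have hdist :
      dist ((y + const (Fin n) c, v), (yh - const (Fin n) c, vh)) ((y, v), (yh, vh)) ≤ c := by
    simp only [Prod.dist_eq, dist_self_add_left, dist_self_sub_left, dist_self]
    exact max_le (max_le hconst hc) (max_le hconst hc)
  calc d x w xh wh i - d y v yh vh i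
      ≤ d (y + const (Fin n) c) v (yh - const (Fin n) c) vh i - d y v yh vh i := by
        gcongr
        exact hd.apply_le_apply (sub_le_iff_le_add'.1 hxy) (by simp [← hxyi]) (sub_le_comm.1 hyxh)
          hw hv hwh hvh hwv hvwh
    _ ≤ dist (d (y + const (Fin n) c) v (yh - const (Fin n) c) vh) (d y v yh vh) :=
        (Real.sub_le_dist _ _).trans (dist_le_pi_dist _ _ i)
    _ ≤ K * c := (hK.dist_le_mul _ hshift _ hbase).trans (by gcongr)

end Decomposition

theorem nondeterministic_embedding_monotone_SE_general
    {n m : ℕ} (wl wu : Fin m → ℝ)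
    (F : (Fin n → ℝ) → (Fin m → ℝ) → (Fin n → ℝ))
    (d : (Fin n → ℝ) → (Fin m → ℝ) → (Fin n → ℝ) → (Fin m → ℝ) → (Fin n → ℝ))
    (hd : IsDecompositionFunction wl wu F d)
    (T : ℝ)
    (x xh y yh : ℝ → (Fin n → ℝ)) (w wh v vh : ℝ → (Fin m → ℝ))
    (hwmem : ∀ t ∈ Set.Icc (0:ℝ) T, w t ∈ Set.Icc wl wu)
    (hwhmem : ∀ t ∈ Set.Icc (0:ℝ) T, wh t ∈ Set.Icc wl wu)
    (hvmem : ∀ t ∈ Set.Icc (0:ℝ) T, v t ∈ Set.Icc wl wu)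
    (hvhmem : ∀ t ∈ Set.Icc (0:ℝ) T, vh t ∈ Set.Icc wl wu)
    -- (x, xh) is a solution of the embedding ODE under input (w, wh)
    (hx : ∀ t ∈ Set.Icc (0:ℝ) T, HasDerivAt x (d (x t) (w t) (xh t) (wh t)) t)
    (hxh : ∀ t ∈ Set.Icc (0:ℝ) T, HasDerivAt xh (d (xh t) (wh t) (x t) (w t)) t)
    -- (y, yh) is a solution of the embedding ODE under input (v, vh)
    (hy : ∀ t ∈ Set.Icc (0:ℝ) T, HasDerivAt y (d (y t) (v t) (yh t) (vh t)) t)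
    (hyh : ∀ t ∈ Set.Icc (0:ℝ) T, HasDerivAt yh (d (yh t) (vh t) (y t) (v t)) t)
    -- southeast-ordered initial conditions and inputs
    (h0 : x 0 ≤ y 0 ∧ yh 0 ≤ xh 0)
    (hinSE : ∀ t ∈ Set.Icc (0:ℝ) T, w t ≤ v t ∧ vh t ≤ wh t) :
    ∀ t ∈ Set.Icc (0:ℝ) T, x t ≤ y t ∧ yh t ≤ xh t := by
  obtain ⟨R, hR⟩ := isCompact_Icc.exists_bound_of_continuousOn
    (f := fun t => (x t, xh t, y t, yh t)) (continuousOn_of_forall_continuousAt fun t ht =>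
      (hx t ht).continuousAt.prodMk <| (hxh t ht).continuousAt.prodMk <|
        (hy t ht).continuousAt.prodMk (hyh t ht).continuousAt)
  simp only [norm_prod_le_iff] at hR
  obtain ⟨K, hK⟩ := hd.1.locallyLipschitzOn.exists_lipschitzOnWith_of_compact
    (((isCompact_closedBall 0 (3 * R)).prod isCompact_Icc).prod
      ((isCompact_closedBall 0 (3 * R)).prod isCompact_Icc))
  set u : Fin n ⊕ Fin n → ℝ → ℝ :=
    Sum.elim (fun i t => x t i - y t i) (fun i t => yh t i - xh t i)
  set u' : Fin n ⊕ Fin n → ℝ → ℝ := Sum.elim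
    (fun i t => d (x t) (w t) (xh t) (wh t) i - d (y t) (v t) (yh t) (vh t) i)
    (fun i t => d (yh t) (vh t) (y t) (v t) i - d (xh t) (wh t) (x t) (w t) i)
  have hu : ∀ j, ∀ t ∈ Icc 0 T, HasDerivAt (u j) (u' j t) t := by
    rintro (i | i) t ht
    · exact (hasDerivAt_pi.1 (hx t ht) i).sub (hasDerivAt_pi.1 (hy t ht) i)
    · exact (hasDerivAt_pi.1 (hyh t ht) i).sub (hasDerivAt_pi.1 (hxh t ht) i)
  have hgap := nonpos_of_hasDerivWithinAt_le_mul_at_nonneg_max (K := K)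
    (fun j => continuousOn_of_forall_continuousAt fun t ht => (hu j t ht).continuousAt)
    (fun j t ht => (hu j t (Ico_subset_Icc_self ht)).hasDerivWithinAt) ?_ ?_
  · exact fun t ht => ⟨fun i => sub_nonpos.1 (hgap t ht (.inl i)),
      fun i => sub_nonpos.1 (hgap t ht (.inr i))⟩
  · intro t ht j hc hmax
    have ht' := Ico_subset_Icc_self ht
    obtain ⟨hxR, hxhR, hyR, hyhR⟩ := hR t ht'
    rcases j with i | i
    · exact hd.apply_sub_apply_le_of_lipschitzOnWith hK hxR hyR hyhR
        (fun j => hmax (.inl j)) rfl (fun j => hmax (.inr j)) (hwmem t ht') (hwhmem t ht')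
        (hvmem t ht') (hvhmem t ht') (hinSE t ht').1 (hinSE t ht').2 hc
    · exact hd.apply_sub_apply_le_of_lipschitzOnWith hK hyhR hxhR hxR
        (fun j => hmax (.inr j)) rfl (fun j => hmax (.inl j)) (hvhmem t ht') (hvmem t ht')
        (hwhmem t ht') (hwmem t ht') (hinSE t ht').2 (hinSE t ht').1 hc
  · rintro (i | i)
    exacts [sub_nonpos.2 (h0.1 i), sub_nonpos.2 (h0.2 i)]

/-- the nondeterministic embedding system associated with a decomposition
function `d` of a mixed-monotone system is monotone with respect to the southeast order,
both in the initial condition and in the disturbance input. -/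
theorem nondeterministic_embedding_monotone_SE
    {n m : ℕ} (wl wu : Fin m → ℝ) (hwlu : wl ≤ wu)
    (F : (Fin n → ℝ) → (Fin m → ℝ) → (Fin n → ℝ))
    (d : (Fin n → ℝ) → (Fin m → ℝ) → (Fin n → ℝ) → (Fin m → ℝ) → (Fin n → ℝ))
    (hd : IsDecompositionFunction wl wu F d)
    (T : ℝ) (hT : 0 ≤ T)
    (x xh y yh : ℝ → (Fin n → ℝ)) (w wh v vh : ℝ → (Fin m → ℝ))
    (hwmem : ∀ t ∈ Set.Icc (0:ℝ) T, w t ∈ Set.Icc wl wu)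
    (hwhmem : ∀ t ∈ Set.Icc (0:ℝ) T, wh t ∈ Set.Icc wl wu)
    (hvmem : ∀ t ∈ Set.Icc (0:ℝ) T, v t ∈ Set.Icc wl wu)
    (hvhmem : ∀ t ∈ Set.Icc (0:ℝ) T, vh t ∈ Set.Icc wl wu)
    (hwpc : PiecewiseContinuousOn w (Set.Icc 0 T))
    (hwhpc : PiecewiseContinuousOn wh (Set.Icc 0 T))
    (hvpc : PiecewiseContinuousOn v (Set.Icc 0 T))
    (hvhpc : PiecewiseContinuousOn vh (Set.Icc 0 T))
    -- (x, xh) is a solution of the embedding ODE under input (w, wh)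
    (hx : ∀ t ∈ Set.Icc (0:ℝ) T, HasDerivAt x (d (x t) (w t) (xh t) (wh t)) t)
    (hxh : ∀ t ∈ Set.Icc (0:ℝ) T, HasDerivAt xh (d (xh t) (wh t) (x t) (w t)) t)
    -- (y, yh) is a solution of the embedding ODE under input (v, vh)
    (hy : ∀ t ∈ Set.Icc (0:ℝ) T, HasDerivAt y (d (y t) (v t) (yh t) (vh t)) t)
    (hyh : ∀ t ∈ Set.Icc (0:ℝ) T, HasDerivAt yh (d (yh t) (vh t) (y t) (v t)) t)
    -- southeast-ordered initial conditions and inputs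
    (h0 : x 0 ≤ y 0 ∧ yh 0 ≤ xh 0)
    (hinSE : ∀ t ∈ Set.Icc (0:ℝ) T, w t ≤ v t ∧ vh t ≤ wh t) :
    ∀ t ∈ Set.Icc (0:ℝ) T, x t ≤ y t ∧ yh t ≤ xh t :=
  nondeterministic_embedding_monotone_SE_general wl wu F d hd T x xh y yh w wh v vh hwmem hwhmem
    hvmem hvhmem hx hxh hy hyh h0 hinSE
end

section
/- (Proposition 1) Suppose F is mixed-monotone with respect to a decomposition function d. Let x : [0, T] → ℝⁿ be a solution of ẋ = F(x, w(t)) under a piecewise continuous disturbance w : [0, T] → 𝒲, and let (a, â) : [0, T] → ℝⁿ × ℝⁿ be a solution of the deterministic embedding ODE (ȧ, ȧ̂) = e(a, â) := (d(a, w̲, â, w̄), d(â, w̄, a, w̲)). If a(0) ⪯ x(0) ⪯ â(0) componentwise, then a(T) ⪯ x(T) ⪯ â(T); in particular the reachable set of [a(0), â(0)] at time T is contained in the hyperrectangle [a(T), â(T)]. -/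
open Set Function Filter Topology

/-! Let `v(t) ≥ 0` be the least `v` with `a(t) ⪯ x(t) + v` and `x(t) - v ⪯ â(t)`. If, say,
`aᵢ - xᵢ` attains `v` at time `t`, then `a ⪯ x + v` and `x - v ⪯ â` with equality in
coordinate `i`, so mixed monotonicity gives `dᵢ(a, w̲, â, w̄) ≤ dᵢ(x + v, w, x - v, w)`, and a
Lipschitz constant `K` of `d` on a compact neighbourhood of the trajectory gives
`dᵢ(x + v, w, x - v, w) ≤ Fᵢ(x, w) + K v`. The same holds for `xᵢ - âᵢ`, so the right Dini
derivative of `v` is at most `K v`, and Grönwall's inequality with `v(0) = 0` gives `v ≡ 0`. -/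

open scoped NNReal
open Metric

section UpdateChain

variable {ι α γ : Type*} [Fintype ι] [DecidableEq ι] [Preorder α] [Preorder γ]
  {f : (ι → α) → γ} {u v : ι → α}

theorem le_of_forall_update_le_update (huv : u ≤ v)
    (h : ∀ j, ∀ z ∈ Icc u v, f (update z j (u j)) ≤ f (update z j (v j))) : f u ≤ f v := by
  suffices ∀ s : Finset ι, f u ≤ f (s.piecewise v u) by simpa using this Finset.univ
  intro s
  induction s using Finset.induction_on with
  | empty => simp
  | insert j s hj ih =>
    have hz : s.piecewise v u ∈ Icc u v := by
      constructor <;> intro k <;> by_cases hk : k ∈ s <;> simp [hk, huv k]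
    calc f u ≤ f (s.piecewise v u) := ih
      _ = f (update (s.piecewise v u) j (u j)) := by
        rw [← Finset.piecewise_eq_of_notMem s v u hj, update_eq_self]
      _ ≤ f (update (s.piecewise v u) j (v j)) := h j _ hz
      _ = f ((insert j s).piecewise v u) := by rw [Finset.piecewise_insert]

theorem le_of_forall_update_ge_update (huv : u ≤ v)
    (h : ∀ j, ∀ z ∈ Icc u v, f (update z j (v j)) ≤ f (update z j (u j))) : f v ≤ f u :=
  le_of_forall_update_le_update (γ := γᵒᵈ) huv h

end UpdateChain

section EmbeddingGap

variable {ι : Type*}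

def embeddingGap (a x ah : ι → ℝ) : Option (ι ⊕ ι) → ℝ
  | none => 0
  | some (.inl i) => a i - x i
  | some (.inr i) => x i - ah i

theorem hasDerivAt_embeddingGap {a x ah : ℝ → ι → ℝ} {a' x' ah' : ι → ℝ} {t : ℝ}
    (ha : HasDerivAt a a' t) (hx : HasDerivAt x x' t) (hah : HasDerivAt ah ah' t)
    (o : Option (ι ⊕ ι)) :
    HasDerivAt (fun s => embeddingGap (a s) (x s) (ah s) o) (embeddingGap a' x' ah' o) t := by
  rcases o with _ | i | i
  · exact hasDerivAt_const t 0
  · exact (hasDerivAt_pi.1 ha i).sub (hasDerivAt_pi.1 hx i)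
  · exact (hasDerivAt_pi.1 hx i).sub (hasDerivAt_pi.1 hah i)

variable [Fintype ι]

/-- The smallest `v ≥ 0` with `a ⪯ x + v` and `x - v ⪯ ah`. -/
def embeddingExcess (a x ah : ι → ℝ) : ℝ :=
  Finset.univ.sup' Finset.univ_nonempty (embeddingGap a x ah)

variable {a x ah : ι → ℝ}

theorem embeddingGap_le_embeddingExcess (o : Option (ι ⊕ ι)) :
    embeddingGap a x ah o ≤ embeddingExcess a x ah :=
  Finset.le_sup' _ (Finset.mem_univ o)

theorem embeddingExcess_nonneg : 0 ≤ embeddingExcess a x ah :=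
  embeddingGap_le_embeddingExcess none

theorem le_add_embeddingExcess (i : ι) : a i ≤ x i + embeddingExcess a x ah :=
  sub_le_iff_le_add'.1 (embeddingGap_le_embeddingExcess (some (.inl i)))

theorem sub_embeddingExcess_le (i : ι) : x i - embeddingExcess a x ah ≤ ah i :=
  sub_le_comm.1 (embeddingGap_le_embeddingExcess (some (.inr i)))

theorem embeddingExcess_nonpos_iff : embeddingExcess a x ah ≤ 0 ↔ a ≤ x ∧ x ≤ ah := by
  refine ⟨fun h => ⟨fun i => ?_, fun i => ?_⟩, fun ⟨hax, hxah⟩ => Finset.sup'_le _ _ ?_⟩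
  · linarith [le_add_embeddingExcess (a := a) (x := x) (ah := ah) i]
  · linarith [sub_embeddingExcess_le (a := a) (x := x) (ah := ah) i]
  · rintro (_ | i | i) -
    · exact le_rfl
    · exact sub_nonpos.2 (hax i)
    · exact sub_nonpos.2 (hxah i)

end EmbeddingGap

namespace IsDecompositionFunction

variable {n m : ℕ} {wl wu : Fin m → ℝ} {F : (Fin n → ℝ) → (Fin m → ℝ) → (Fin n → ℝ)}
  {d : (Fin n → ℝ) → (Fin m → ℝ) → (Fin n → ℝ) → (Fin m → ℝ) → (Fin n → ℝ)}

theorem apply_le_apply_s3 (hd : IsDecompositionFunction wl wu F d) {i : Fin n}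
    {x y xh yh : Fin n → ℝ} {w w' wh wh' : Fin m → ℝ}
    (hxy : x ≤ y) (hxyi : x i = y i) (hxh : yh ≤ xh) (hw : w ≤ w') (hwh : wh' ≤ wh)
    (hw_mem : w ∈ Icc wl wu) (hw'_mem : w' ∈ Icc wl wu)
    (hwh_mem : wh ∈ Icc wl wu) (hwh'_mem : wh' ∈ Icc wl wu) :
    d x w xh wh i ≤ d y w' yh wh' i := by
  obtain ⟨-, -, hmono_x, hanti_xh, hmono_w, hanti_wh⟩ := hd
  calc d x w xh wh i ≤ d y w xh wh i := by
        refine le_of_forall_update_le_update (f := fun z => d z w xh wh i) hxy fun j z _ => ?_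
        rcases eq_or_ne j i with rfl | hji
        · simp only [hxyi, le_refl]
        · exact hmono_x i j hji z xh _ _ (hxy j) w hw_mem wh hwh_mem
    _ ≤ d y w yh wh i :=
        le_of_forall_update_ge_update (f := fun z => d y w z wh i) hxh fun j z _ =>
          hanti_xh i j y z _ _ (hxh j) w hw_mem wh hwh_mem
    _ ≤ d y w' yh wh i :=
        le_of_forall_update_le_update (f := fun z => d y z yh wh i) hw fun k z hz =>
          hmono_w i k y yh _ _ (hw_mem.1 k) (hw k) (hw'_mem.2 k) z
            (Icc_subset_Icc hw_mem.1 hw'_mem.2 hz) wh hwh_mem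
    _ ≤ d y w' yh wh' i :=
        le_of_forall_update_ge_update (f := fun z => d y w' yh z i) hwh fun k z hz =>
          hanti_wh i k y yh _ _ (hwh'_mem.1 k) (hwh k) (hwh_mem.2 k) w' hw'_mem z
            (Icc_subset_Icc hwh'_mem.1 hwh_mem.2 hz)

theorem embeddingGap_le_mul_embeddingExcess (hd : IsDecompositionFunction wl wu F d)
    (hwlu : wl ≤ wu) {C : Set (Fin n → ℝ)} {K : ℝ≥0}
    (hK : LipschitzOnWith K
      (fun p : ((Fin n → ℝ) × (Fin m → ℝ)) × ((Fin n → ℝ) × (Fin m → ℝ)) =>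
        d p.1.1 p.1.2 p.2.1 p.2.2) ((C ×ˢ Icc wl wu) ×ˢ (C ×ˢ Icc wl wu)))
    {A X Ah : Fin n → ℝ} {W : Fin m → ℝ} (hW : W ∈ Icc wl wu)
    (hC : closedBall X (embeddingExcess A X Ah) ⊆ C) {o : Option (Fin n ⊕ Fin n)}
    (ho : embeddingGap A X Ah o = embeddingExcess A X Ah) :
    embeddingGap (d A wl Ah wu) (F X W) (d Ah wu A wl) o ≤ K * embeddingExcess A X Ah := by
  set v := embeddingExcess A X Ah
  have hv : 0 ≤ v := embeddingExcess_nonneg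
  have hlip : ∀ y ∈ closedBall X v, ∀ yh ∈ closedBall X v, ∀ i,
      |d y W yh W i - F X W i| ≤ K * v := by
    intro y hy yh hyh i
    have hX := hC (mem_closedBall_self hv)
    rw [← hd.2.1 X W hW, ← Real.dist_eq]
    calc dist (d y W yh W i) (d X W X W i) ≤ dist (d y W yh W) (d X W X W) :=
          dist_le_pi_dist _ _ i
      _ ≤ K * dist ((y, W), (yh, W)) ((X, W), (X, W)) :=
          hK.dist_le_mul ((y, W), (yh, W)) ⟨⟨hC hy, hW⟩, hC hyh, hW⟩ ((X, W), (X, W))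
            ⟨⟨hX, hW⟩, hX, hW⟩
      _ ≤ K * v := by
          gcongr
          simp [Prod.dist_eq, mem_closedBall.1 hy, mem_closedBall.1 hyh]
  have hplus : (fun j => X j + v) ∈ closedBall X v := by
    simp [mem_closedBall, dist_pi_le_iff hv, abs_of_nonneg hv]
  have hminus : (fun j => X j - v) ∈ closedBall X v := by
    simp [mem_closedBall, dist_pi_le_iff hv, abs_of_nonneg hv]
  have hwl : wl ∈ Icc wl wu := ⟨le_rfl, hwlu⟩
  have hwu : wu ∈ Icc wl wu := ⟨hwlu, le_rfl⟩
  rcases o with _ | i | i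
  · exact mul_nonneg K.2 hv
  · have hmono : d A wl Ah wu i ≤ d (fun j => X j + v) W (fun j => X j - v) W i :=
      hd.apply_le_apply_s3 (fun j => le_add_embeddingExcess j) (sub_eq_iff_eq_add'.1 ho)
        (fun j => sub_embeddingExcess_le j) hW.1 hW.2 hwl hW hwu hW
    have := (abs_le.1 (hlip _ hplus _ hminus i)).2
    change d A wl Ah wu i - F X W i ≤ K * v
    linarith
  · have hmono : d (fun j => X j - v) W (fun j => X j + v) W i ≤ d Ah wu A wl i :=
      hd.apply_le_apply_s3 (fun j => sub_embeddingExcess_le j) (sub_eq_iff_comm.1 ho)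
        (fun j => le_add_embeddingExcess j) hW.2 hW.1 hW hwu hW hwl
    have := (abs_le.1 (hlip _ hminus _ hplus i)).1
    change F X W i - d Ah wu A wl i ≤ K * v
    linarith

end IsDecompositionFunction

theorem HasDerivAt.eventually_lt_add_mul_sub {g : ℝ → ℝ} {g' c r t : ℝ}
    (hg : HasDerivAt g g' t) (hc : g t ≤ c) (hr : g t = c → g' < r) :
    ∀ᶠ z in 𝓝[>] t, g z < c + r * (z - t) := by
  rcases hc.lt_or_eq with hlt | heq
  · refine eventually_nhdsWithin_of_eventually_nhds
      (hg.continuousAt.eventually_lt (by fun_prop) ?_)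
    simpa using hlt
  · filter_upwards [hg.hasDerivWithinAt.limsup_slope_le' (lt_irrefl t) (hr heq),
      self_mem_nhdsWithin] with z hz (hzt : t < z)
    rw [slope_def_field, div_lt_iff₀ (sub_pos.2 hzt)] at hz
    linarith

theorem Finset.sup'_le_gronwallBound {ι : Type*} {s : Finset ι} (hs : s.Nonempty)
    {g g' : ι → ℝ → ℝ} {K a b : ℝ} (hg : ∀ i ∈ s, ∀ t ∈ Set.Icc a b, HasDerivAt (g i) (g' i t) t)
    (hmax : ∀ i ∈ s, ∀ t ∈ Set.Ico a b,
      g i t = s.sup' hs (g · t) → g' i t ≤ K * s.sup' hs (g · t)) :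
    ∀ t ∈ Set.Icc a b, s.sup' hs (g · t) ≤ gronwallBound (s.sup' hs (g · a)) K 0 (t - a) := by
  refine le_gronwallBound_of_liminf_deriv_right_le (f' := fun t => K * s.sup' hs (g · t))
    (ContinuousOn.finset_sup'_apply hs fun i hi t ht =>
      (hg i hi t ht).continuousAt.continuousWithinAt) (fun t ht r hr => ?_) le_rfl
    fun t _ => (add_zero _).ge
  have hlt : ∀ᶠ z in 𝓝[>] t, ∀ i ∈ s, g i z < s.sup' hs (g · t) + r * (z - t) :=
    s.eventually_all.2 fun i hi =>
      (hg i hi t (Set.Ico_subset_Icc_self ht)).eventually_lt_add_mul_sub (s.le_sup' (g · t) hi)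
        fun h => (hmax i hi t ht h).trans_lt hr
  refine (hlt.and self_mem_nhdsWithin).frequently.mono fun z ⟨hz, (hzt : t < z)⟩ => ?_
  rw [inv_mul_lt_iff₀ (sub_pos.2 hzt)]
  linarith [(s.sup'_lt_iff hs).2 hz]

theorem reachable_set_overapproximation_general
    {n m : ℕ} (wl wu : Fin m → ℝ) (hwlu : wl ≤ wu)
    (F : (Fin n → ℝ) → (Fin m → ℝ) → (Fin n → ℝ))
    (d : (Fin n → ℝ) → (Fin m → ℝ) → (Fin n → ℝ) → (Fin m → ℝ) → (Fin n → ℝ))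
    (hd : IsDecompositionFunction wl wu F d)
    (T : ℝ) (hT : 0 ≤ T)
    (w : ℝ → (Fin m → ℝ))
    (hwmem : ∀ t ∈ Set.Icc (0:ℝ) T, w t ∈ Set.Icc wl wu)
    -- x is a solution of ẋ = F(x, w(t)) on [0, T]
    (x : ℝ → (Fin n → ℝ))
    (hx : ∀ t ∈ Set.Icc (0:ℝ) T, HasDerivAt x (F (x t) (w t)) t)
    -- (a, ah) is a solution of the deterministic embedding ODE on [0, T]
    (a ah : ℝ → (Fin n → ℝ))
    (ha : ∀ t ∈ Set.Icc (0:ℝ) T, HasDerivAt a (d (a t) wl (ah t) wu) t)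
    (hah : ∀ t ∈ Set.Icc (0:ℝ) T, HasDerivAt ah (d (ah t) wu (a t) wl) t)
    (h0 : a 0 ≤ x 0 ∧ x 0 ≤ ah 0) :
    a T ≤ x T ∧ x T ≤ ah T := by
  have hgap : ∀ o, ∀ t ∈ Icc 0 T, HasDerivAt (fun s => embeddingGap (a s) (x s) (ah s) o)
      (embeddingGap (d (a t) wl (ah t) wu) (F (x t) (w t)) (d (ah t) wu (a t) wl) o) t :=
    fun o t ht => hasDerivAt_embeddingGap (ha t ht) (hx t ht) (hah t ht) o
  obtain ⟨B, hB⟩ := isCompact_Icc.bddAbove_image (ContinuousOn.finset_sup'_apply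
    Finset.univ_nonempty fun o _ t ht => (hgap o t ht).continuousAt.continuousWithinAt)
  set C := cthickening B (x '' Icc 0 T)
  have hC : ∀ t ∈ Icc 0 T, closedBall (x t) (embeddingExcess (a t) (x t) (ah t)) ⊆ C :=
    fun t ht y hy => mem_cthickening_of_dist_le y (x t) B _ (mem_image_of_mem x ht)
      ((mem_closedBall.1 hy).trans (hB (mem_image_of_mem _ ht)))
  have hC_compact : IsCompact C := (isCompact_Icc.image_of_continuousOn
    fun t ht => (hx t ht).continuousAt.continuousWithinAt).cthickening
  obtain ⟨K, hK⟩ := hd.1.locallyLipschitzOn.exists_lipschitzOnWith_of_compact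
    ((hC_compact.prod isCompact_Icc).prod (hC_compact.prod isCompact_Icc))
  have hexcess := Finset.sup'_le_gronwallBound Finset.univ_nonempty (fun o _ => hgap o)
    (fun o _ t ht => hd.embeddingGap_le_mul_embeddingExcess hwlu hK
      (hwmem t (Ico_subset_Icc_self ht)) (hC t (Ico_subset_Icc_self ht))) T ⟨hT, le_rfl⟩
  rw [gronwallBound_ε0] at hexcess
  exact embeddingExcess_nonpos_iff.1 (hexcess.trans
    (mul_nonpos_of_nonpos_of_nonneg (embeddingExcess_nonpos_iff.2 h0) (Real.exp_pos _).le))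

/-- Proposition 1: trajectories of the deterministic embedding system
bound the reachable states of the original system: if `a(0) ⪯ x(0) ⪯ â(0)` then
`a(T) ⪯ x(T) ⪯ â(T)`, for any piecewise continuous disturbance valued in `𝒲`; in
particular `R^F(T; [a(0), â(0)]) ⊆ [a(T), â(T)]`. -/
theorem reachable_set_overapproximation
    {n m : ℕ} (wl wu : Fin m → ℝ) (hwlu : wl ≤ wu)
    (F : (Fin n → ℝ) → (Fin m → ℝ) → (Fin n → ℝ))
    (d : (Fin n → ℝ) → (Fin m → ℝ) → (Fin n → ℝ) → (Fin m → ℝ) → (Fin n → ℝ))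
    (hd : IsDecompositionFunction wl wu F d)
    (T : ℝ) (hT : 0 ≤ T)
    (w : ℝ → (Fin m → ℝ))
    (hwmem : ∀ t ∈ Set.Icc (0:ℝ) T, w t ∈ Set.Icc wl wu)
    (hwpc : PiecewiseContinuousOn w (Set.Icc 0 T))
    -- x is a solution of ẋ = F(x, w(t)) on [0, T]
    (x : ℝ → (Fin n → ℝ))
    (hx : ∀ t ∈ Set.Icc (0:ℝ) T, HasDerivAt x (F (x t) (w t)) t)
    -- (a, ah) is a solution of the deterministic embedding ODE on [0, T]
    (a ah : ℝ → (Fin n → ℝ))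
    (ha : ∀ t ∈ Set.Icc (0:ℝ) T, HasDerivAt a (d (a t) wl (ah t) wu) t)
    (hah : ∀ t ∈ Set.Icc (0:ℝ) T, HasDerivAt ah (d (ah t) wu (a t) wl) t)
    (h0 : a 0 ≤ x 0 ∧ x 0 ≤ ah 0) :
    a T ≤ x T ∧ x T ≤ ah T :=
  reachable_set_overapproximation_general wl wu hwlu F d hd T hT w hwmem x hx a ah ha hah h0
end

section
/- (Theorem 1, Part 2) Suppose F is mixed-monotone with respect to a decomposition function d, and let (a, â) : [0, ∞) → ℝⁿ × ℝⁿ be a solution of the deterministic embedding ODE (ȧ, ȧ̂) = e(a, â) with a(0) ⪯ â(0) and 0 ⪯_SE e(a(0), â(0)). Then the limits x_eq := lim_{t→∞} a(t) and x̂_eq := lim_{t→∞} â(t) exist in ℝⁿ and satisfy e(x_eq, x̂_eq) = 0, i.e., (x_eq, x̂_eq) is an equilibrium of the deterministic embedding system; moreover a(0) ⪯ x_eq ⪯ x̂_eq ⪯ â(0). -/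
open Set Function Filter Topology

/-!
In the coordinates `X = (x, -x̂)` the southeast order becomes the componentwise order and the
embedding system becomes a cooperative (Kamke) system `Ẋ = G X` with `G` locally Lipschitz.
For such systems a Grönwall estimate on `‖(X - Y)⁺‖` gives the comparison principle. Comparing a
solution with its time shift `X (· + h)` and letting `h → 0` shows that `0 ≤ G (X 0)` propagates
to `0 ≤ G (X t)`, so `a` increases and `â` decreases. Comparing `(a, â)` with the supersolution
`(â, a)` gives `a ≤ â`, so both are monotone and bounded and converge. A convergent trajectory
whose velocity converges has limit velocity zero, so the limit is an equilibrium.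
-/

theorem monotoneOn_Icc_of_update_s7 {ι α β : Type*} [Finite ι] [DecidableEq ι] [Preorder α]
    [Preorder β] {f : (ι → α) → β} {lo hi : ι → α}
    (hf : ∀ j, ∀ x ∈ Icc lo hi, ∀ s t, lo j ≤ s → s ≤ t → t ≤ hi j →
      f (update x j s) ≤ f (update x j t)) :
    MonotoneOn f (Icc lo hi) := by
  have key (S : Finset ι) : ∀ x ∈ Icc lo hi, ∀ y ∈ Icc lo hi, x ≤ y →
      (∀ j ∉ S, x j = y j) → f x ≤ f y := by
    induction S using Finset.induction_on with
    | empty =>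
      intro x _ y _ _ hxy
      rw [funext fun j => hxy j (Finset.notMem_empty j)]
    | insert c S _ ih =>
      intro x hx y hy hle hxy
      have hx' : update x c (y c) ∈ Icc lo hi :=
        ⟨le_update_iff.2 ⟨hy.1 c, fun j _ => hx.1 j⟩,
          update_le_iff.2 ⟨hy.2 c, fun j _ => hx.2 j⟩⟩
      calc f x = f (update x c (x c)) := by rw [update_eq_self]
        _ ≤ f (update x c (y c)) := hf c x hx _ _ (hx.1 c) (hle c) (hy.2 c)
        _ ≤ f y := by
          refine ih _ hx' y hy (update_le_iff.2 ⟨le_rfl, fun j _ => hle j⟩) fun j hj => ?_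
          rcases eq_or_ne j c with rfl | hjc
          · simp
          · rw [update_of_ne hjc]
            exact hxy j (by simp [hj, hjc])
  cases nonempty_fintype ι
  exact fun x hx y hy hle => key Finset.univ x hx y hy hle (by simp)

theorem MonotoneOn.exists_tendsto_atTop_of_le {α : Type*} [ConditionallyCompleteLattice α]
    [TopologicalSpace α] [SupConvergenceClass α] {f : ℝ → α} {a : ℝ}
    (hf : MonotoneOn f (Ici a)) {B : α} (hB : ∀ t ∈ Ici a, f t ≤ B) :
    ∃ l, Tendsto f atTop (𝓝 l) ∧ ∀ t ∈ Ici a, f t ≤ l := by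
  have hmono : Monotone fun t => f (max t a) := fun s t hst =>
    hf (le_max_right s a) (le_max_right t a) (max_le_max_right a hst)
  have hbdd : BddAbove (range fun t => f (max t a)) :=
    ⟨B, forall_mem_range.2 fun t => hB _ (le_max_right t a)⟩
  refine ⟨_, (tendsto_atTop_ciSup hmono hbdd).congr' ?_, fun t ht => ?_⟩
  · filter_upwards [eventually_ge_atTop a] with t ht
    rw [max_eq_left ht]
  · simpa [max_eq_left (mem_Ici.1 ht)] using le_ciSup hbdd t

theorem eq_zero_of_tendsto_of_hasDerivAt {E : Type*} [NormedAddCommGroup E] [NormedSpace ℝ E]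
    {f f' : ℝ → E} {l c : E} (hf : ∀ᶠ t in atTop, HasDerivAt f (f' t) t)
    (hl : Tendsto f atTop (𝓝 l)) (hc : Tendsto f' atTop (𝓝 c)) : c = 0 := by
  refine norm_le_zero_iff.1 (le_of_forall_pos_le_add fun ε hε => ?_)
  obtain ⟨T, hT⟩ := eventually_atTop.1
    (hf.and (hc.eventually (Metric.closedBall_mem_nhds c hε)))
  -- on `[t, t + 1]` the map `s ↦ f s - s • c` has derivative `f' s - c`, of norm at most `ε`
  have hstep : ∀ t ≥ T, ‖f (t + 1) - f t - c‖ ≤ ε := by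
    intro t ht
    have := norm_image_sub_le_of_norm_deriv_le_segment' (f := fun s => f s - s • c)
      (f' := fun s => f' s - c) (C := ε)
      (fun s hs => (((hT s (ht.trans hs.1)).1).sub ((hasDerivAt_id s).smul_const c)
        |>.congr_deriv (by simp)).hasDerivWithinAt)
      (fun s hs => by simpa [dist_eq_norm] using (hT s (ht.trans hs.1)).2)
      (t + 1) ⟨by linarith, le_rfl⟩
    simpa [add_smul, sub_sub, add_comm, add_left_comm] using this
  have hlim : Tendsto (fun t => f (t + 1) - f t - c) atTop (𝓝 (l - l - c)) :=
    ((hl.comp (tendsto_atTop_add_const_right _ 1 tendsto_id)).sub hl).sub_const c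
  simpa using le_of_tendsto hlim.norm (eventually_atTop.2 ⟨T, hstep⟩)

section Cooperative

variable {ι : Type*}

theorem continuous_pi_posPart : Continuous fun v : ι → ℝ => v⁺ :=
  continuous_pi fun i => (continuous_apply i).max continuous_const

theorem hasDerivAt_sumElim_neg {x xh : ℝ → ι → ℝ} {v vh : ι → ℝ} {t : ℝ}
    (hx : HasDerivAt x v t) (hxh : HasDerivAt xh vh t) :
    HasDerivAt (fun t => Sum.elim (x t) (-xh t)) (Sum.elim v (-vh)) t :=
  hasDerivAt_pi.2 fun
    | .inl i => hasDerivAt_pi.1 hx i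
    | .inr i => (hasDerivAt_pi.1 hxh i).neg

theorem sumElim_neg_le_sumElim_neg_iff {x y xh yh : ι → ℝ} :
    Sum.elim x (-xh) ≤ Sum.elim y (-yh) ↔ x ≤ y ∧ yh ≤ xh := by
  rw [Sum.elim_le_elim_iff, neg_le_neg_iff]

theorem tendsto_sumElim_neg_iff {α : Type*} {l : Filter α} {x xh : α → ι → ℝ} {y yh : ι → ℝ} :
    Tendsto (fun t => Sum.elim (x t) (-xh t)) l (𝓝 (Sum.elim y (-yh))) ↔
      Tendsto x l (𝓝 y) ∧ Tendsto xh l (𝓝 yh) := by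
  simp only [tendsto_pi_nhds, Sum.forall, Sum.elim_inl, Sum.elim_inr, Pi.neg_apply,
    tendsto_neg_iff]

variable [Fintype ι]

theorem monotoneOn_Ici_of_hasDerivAt_nonneg {f f' : ℝ → ι → ℝ} {a : ℝ}
    (hf : ∀ t ∈ Ici a, HasDerivAt f (f' t) t) (hf' : ∀ t ∈ Ici a, 0 ≤ f' t) :
    MonotoneOn f (Ici a) := fun _ hs _ ht hst i =>
  monotoneOn_of_hasDerivWithinAt_nonneg (convex_Ici a)
    (fun τ hτ => ((continuous_apply i).continuousAt.comp (hf τ hτ).continuousAt).continuousWithinAt)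
    (fun τ hτ => (hasDerivAt_pi.1 (hf τ (interior_subset hτ)) i).hasDerivWithinAt)
    (fun τ hτ => hf' τ (interior_subset hτ) i) hs ht hst

theorem le_norm_posPart (v : ι → ℝ) (i : ι) : v i ≤ ‖v⁺‖ :=
  calc v i ≤ (v i)⁺ := le_posPart _
    _ ≤ ‖v⁺ i‖ := le_abs_self _
    _ ≤ ‖v⁺‖ := norm_le_pi_norm _ i

theorem norm_posPart_lt {v : ι → ℝ} {c : ℝ} (hv : ∀ i, v i < c) (hc : 0 < c) : ‖v⁺‖ < c :=
  (pi_norm_lt_iff hc).2 fun i => by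
    rw [Pi.posPart_apply, Real.norm_eq_abs, abs_of_nonneg (posPart_nonneg _)]
    exact posPart_lt.2 ⟨hv i, hc⟩

theorem norm_posPart_smul {c : ℝ} (hc : 0 ≤ c) (v : ι → ℝ) : ‖(c • v)⁺‖ = c * ‖v⁺‖ := by
  have : (c • v)⁺ = c • v⁺ := funext fun i => by
    rw [Pi.smul_apply, Pi.posPart_apply, Pi.posPart_apply, Pi.smul_apply, smul_eq_mul,
      smul_eq_mul, posPart_def, posPart_def, mul_max_of_nonneg _ _ hc, mul_zero]
  rw [this, norm_smul, Real.norm_of_nonneg hc]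

theorem LocallyLipschitz.exists_supClosed_lipschitzOnWith {β : Type*} [PseudoMetricSpace β]
    {g : (ι → ℝ) → β} (hg : LocallyLipschitz g) {k : Set (ι → ℝ)} (hk : IsCompact k) :
    ∃ s, k ⊆ s ∧ SupClosed s ∧ ∃ K, LipschitzOnWith K g s := by
  obtain ⟨lo, hlo⟩ := hk.isBounded.bddBelow
  obtain ⟨hi, hhi⟩ := hk.isBounded.bddAbove
  exact ⟨Icc lo hi, fun x hx => ⟨hlo hx, hhi hx⟩,
    fun x hx y hy => ⟨le_sup_of_le_left hx.1, sup_le hx.2 hy.2⟩,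
    hg.locallyLipschitzOn.exists_lipschitzOnWith_of_compact isCompact_Icc⟩

def Cooperative (g : (ι → ℝ) → ι → ℝ) : Prop :=
  ∀ ⦃x y : ι → ℝ⦄, x ≤ y → ∀ i, x i = y i → g x i ≤ g y i

variable {g : (ι → ℝ) → ι → ℝ} {K : NNReal} {s : Set (ι → ℝ)}

theorem Cooperative.apply_sub_apply_le (hg : Cooperative g) (hgs : LipschitzOnWith K g s)
    (hs : SupClosed s) {x y : ι → ℝ} (hx : x ∈ s) (hy : y ∈ s) {i : ι} (hi : y i ≤ x i) :
    g x i - g y i ≤ K * ‖(x - y)⁺‖ :=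
  calc g x i - g y i ≤ g (x ⊔ y) i - g y i :=
        sub_le_sub_right (hg le_sup_left i (sup_eq_left.2 hi).symm) _
    _ ≤ ‖g (x ⊔ y) - g y‖ := (le_abs_self _).trans (norm_le_pi_norm (g (x ⊔ y) - g y) i)
    _ ≤ K * ‖x ⊔ y - y‖ := hgs.norm_sub_le (hs hx hy) hy
    _ = K * ‖(x - y)⁺‖ := by rw [sup_eq_add_posPart_sub, add_sub_cancel_left]

theorem Cooperative.eventually_norm_posPart_sub_lt (hg : Cooperative g)
    (hgs : LipschitzOnWith K g s) (hs : SupClosed s) {x y : ℝ → ι → ℝ} {vx vy : ι → ℝ}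
    {t r : ℝ} (hx : HasDerivAt x vx t) (hy : HasDerivAt y vy t) (hvx : vx ≤ g (x t))
    (hvy : g (y t) ≤ vy) (hxs : x t ∈ s) (hys : y t ∈ s) (hr : K * ‖(x t - y t)⁺‖ < r) :
    ∀ᶠ z in 𝓝[>] t, ‖(x z - y z)⁺‖ < ‖(x t - y t)⁺‖ + r * (z - t) := by
  have hr0 : 0 < r := lt_of_le_of_lt (by positivity) hr
  have hcoord : ∀ i, ∀ᶠ z in 𝓝[>] t, x z i - y z i < ‖(x t - y t)⁺‖ + r * (z - t) := by
    intro i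
    rcases (le_norm_posPart (x t - y t) i).lt_or_eq with hlt | heq
    · have hc : ContinuousWithinAt (fun z => x z i - y z i) (Ioi t) t :=
        ((continuous_apply i).continuousAt.comp
          (hx.continuousAt.sub hy.continuousAt)).continuousWithinAt
      filter_upwards [hc.eventually_lt continuousWithinAt_const hlt, self_mem_nhdsWithin]
        with z hz (hzt : t < z)
      nlinarith
    · -- a coordinate realising the maximum grows at rate at most `K ‖(x t - y t)⁺‖ < r`
      have hderiv : HasDerivAt (fun z => x z i - y z i) (vx i - vy i) t :=
        (hasDerivAt_pi.1 hx i).sub (hasDerivAt_pi.1 hy i)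
      have hrate : vx i - vy i < r := by
        have := hg.apply_sub_apply_le hgs hs hxs hys
          (sub_nonneg.1 (heq ▸ norm_nonneg _ : 0 ≤ (x t - y t) i))
        linarith [hvx i, hvy i]
      filter_upwards [hderiv.hasDerivWithinAt.limsup_slope_le' (lt_irrefl t) hrate,
        self_mem_nhdsWithin] with z hz (hzt : t < z)
      rw [slope_def_field, div_lt_iff₀ (sub_pos.2 hzt)] at hz
      have : x t i - y t i = ‖(x t - y t)⁺‖ := heq
      linarith
  filter_upwards [eventually_all.2 hcoord, self_mem_nhdsWithin] with z hz (hzt : t < z)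
  exact norm_posPart_lt hz (by nlinarith [norm_nonneg (x t - y t)⁺, sub_pos.2 hzt])

theorem Cooperative.norm_posPart_sub_le (hg : Cooperative g) (hgs : LipschitzOnWith K g s)
    (hs : SupClosed s) {x y x' y' : ℝ → ι → ℝ} {a b : ℝ}
    (hx : ∀ t ∈ Icc a b, HasDerivAt x (x' t) t) (hy : ∀ t ∈ Icc a b, HasDerivAt y (y' t) t)
    (hx' : ∀ t ∈ Icc a b, x' t ≤ g (x t)) (hy' : ∀ t ∈ Icc a b, g (y t) ≤ y' t)
    (hxs : ∀ t ∈ Icc a b, x t ∈ s) (hys : ∀ t ∈ Icc a b, y t ∈ s) :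
    ∀ t ∈ Icc a b, ‖(x t - y t)⁺‖ ≤ ‖(x a - y a)⁺‖ * Real.exp (K * (t - a)) := by
  have hcont : ContinuousOn (fun t => ‖(x t - y t)⁺‖) (Icc a b) :=
    (continuous_pi_posPart.comp_continuousOn fun t ht =>
      ((hx t ht).continuousAt.sub (hy t ht).continuousAt).continuousWithinAt).norm
  have hslope : ∀ t ∈ Ico a b, ∀ r, K * ‖(x t - y t)⁺‖ < r →
      ∃ᶠ z in 𝓝[>] t, (z - t)⁻¹ * (‖(x z - y z)⁺‖ - ‖(x t - y t)⁺‖) < r := by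
    intro t ht r hr
    have ht' := Ico_subset_Icc_self ht
    refine Eventually.frequently ?_
    filter_upwards [hg.eventually_norm_posPart_sub_lt hgs hs (hx t ht') (hy t ht') (hx' t ht')
      (hy' t ht') (hxs t ht') (hys t ht') hr, self_mem_nhdsWithin] with z hz (hzt : t < z)
    rw [inv_mul_lt_iff₀ (sub_pos.2 hzt)]
    linarith
  intro t ht
  simpa [gronwallBound_ε0] using le_gronwallBound_of_liminf_deriv_right_le (ε := 0) hcont hslope
    le_rfl (fun t _ => (add_zero _).symm.le) t ht

theorem Cooperative.le_of_hasDerivAt (hg : Cooperative g) (hgL : LocallyLipschitz g)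
    {x y x' y' : ℝ → ι → ℝ} {a b : ℝ}
    (hx : ∀ t ∈ Icc a b, HasDerivAt x (x' t) t) (hy : ∀ t ∈ Icc a b, HasDerivAt y (y' t) t)
    (hx' : ∀ t ∈ Icc a b, x' t ≤ g (x t)) (hy' : ∀ t ∈ Icc a b, g (y t) ≤ y' t)
    (hxy : x a ≤ y a) : ∀ t ∈ Icc a b, x t ≤ y t := by
  have hxc : ContinuousOn x (Icc a b) := fun t ht => (hx t ht).continuousAt.continuousWithinAt
  have hyc : ContinuousOn y (Icc a b) := fun t ht => (hy t ht).continuousAt.continuousWithinAt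
  obtain ⟨s, hks, hs, K, hK⟩ := hgL.exists_supClosed_lipschitzOnWith
    ((isCompact_Icc.image_of_continuousOn hxc).union (isCompact_Icc.image_of_continuousOn hyc))
  intro t ht
  have := hg.norm_posPart_sub_le hK hs hx hy hx' hy'
    (fun τ hτ => hks (Or.inl (mem_image_of_mem x hτ)))
    (fun τ hτ => hks (Or.inr (mem_image_of_mem y hτ))) t ht
  rwa [posPart_eq_zero.2 (sub_nonpos.2 hxy), norm_zero, zero_mul, norm_le_zero_iff,
    posPart_eq_zero, sub_nonpos] at this

/-- Comparing `x` with `x (· + h)` bounds `(x t - x (t + h))⁺ / h` by a multiple of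
`(x a - x (a + h))⁺ / h`; as `h → 0⁺` these tend to `(-g (x t))⁺` and `(-g (x a))⁺ = 0`. -/
theorem Cooperative.nonneg_of_nonneg (hg : Cooperative g) (hgL : LocallyLipschitz g)
    {x : ℝ → ι → ℝ} {a : ℝ} (hx : ∀ t ∈ Ici a, HasDerivAt x (g (x t)) t) (ha : 0 ≤ g (x a)) :
    ∀ t ∈ Ici a, 0 ≤ g (x t) := by
  intro t ht
  obtain ⟨s, hks, hs, K, hK⟩ := hgL.exists_supClosed_lipschitzOnWith
    ((isCompact_Icc (a := a) (b := t + 1)).image_of_continuousOn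
      fun τ hτ => (hx τ hτ.1).continuousAt.continuousWithinAt)
  have hshift : ∀ h ∈ Ioc (0 : ℝ) 1,
      h⁻¹ * ‖(x t - x (t + h))⁺‖ ≤ h⁻¹ * ‖(x a - x (a + h))⁺‖ * Real.exp (K * (t - a)) := by
    intro h hh
    rw [mul_assoc]
    refine mul_le_mul_of_nonneg_left ?_ (inv_nonneg.2 hh.1.le)
    refine hg.norm_posPart_sub_le hK hs (x' := fun τ => g (x τ))
      (y' := fun τ => g (x (τ + h))) (fun τ hτ => hx τ hτ.1)
      (fun τ hτ => (hx (τ + h) (by simp only [mem_Ici]; linarith [hτ.1, hh.1])).comp_add_const τ h)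
      (fun _ _ => le_rfl) (fun _ _ => le_rfl)
      (fun τ hτ => hks (mem_image_of_mem x ⟨hτ.1, by linarith [hτ.2]⟩))
      (fun τ hτ => hks (mem_image_of_mem x ⟨by linarith [hτ.1, hh.1], by linarith [hτ.2, hh.2]⟩))
      t ⟨ht, le_rfl⟩
  have hdiff (τ : ℝ) (hτ : τ ∈ Ici a) : Tendsto (fun h => h⁻¹ * ‖(x τ - x (τ + h))⁺‖)
      (𝓝[>] 0) (𝓝 ‖(-g (x τ))⁺‖) := by
    refine (((continuous_pi_posPart.comp continuous_neg).norm.tendsto _).comp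
      (hx τ hτ).tendsto_slope_zero_right).congr' ?_
    filter_upwards [self_mem_nhdsWithin] with h (hh : 0 < h)
    simp only [comp_apply, ← smul_neg, neg_sub]
    exact norm_posPart_smul (inv_nonneg.2 hh.le) _
  have hle := le_of_tendsto_of_tendsto (hdiff t ht) ((hdiff a self_mem_Ici).mul_const _)
    (mem_of_superset (Ioc_mem_nhdsGT one_pos) hshift)
  rwa [posPart_eq_zero.2 (neg_nonpos.2 ha), norm_zero, zero_mul, norm_le_zero_iff,
    posPart_eq_zero, neg_nonpos] at hle

end Cooperative

namespace IsDecompositionFunction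

variable {n m : ℕ} {wl wu : Fin m → ℝ} {F : (Fin n → ℝ) → (Fin m → ℝ) → (Fin n → ℝ)}
  {d : (Fin n → ℝ) → (Fin m → ℝ) → (Fin n → ℝ) → (Fin m → ℝ) → (Fin n → ℝ)}

theorem apply_le_apply_of_le_of_eq (hd : IsDecompositionFunction wl wu F d) {w wh : Fin m → ℝ}
    (hw : w ∈ Icc wl wu) (hwh : wh ∈ Icc wl wu) {x y xh : Fin n → ℝ} (hxy : x ≤ y) {i : Fin n}
    (hi : x i = y i) : d x w xh wh i ≤ d y w xh wh i := by
  obtain ⟨-, -, hmono, -⟩ := hd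
  refine monotoneOn_Icc_of_update_s7 (f := fun x => d x w xh wh i) (fun j z _ s t hs hst ht => ?_)
    ⟨le_rfl, hxy⟩ ⟨hxy, le_rfl⟩ hxy
  rcases eq_or_ne j i with rfl | hji
  · rw [le_antisymm hst (ht.trans (hi ▸ hs))]
  · exact hmono i j hji z xh s t hst w hw wh hwh

theorem apply_le_apply_of_le_right (hd : IsDecompositionFunction wl wu F d) {w wh : Fin m → ℝ}
    (hw : w ∈ Icc wl wu) (hwh : wh ∈ Icc wl wu) {x xh yh : Fin n → ℝ} (hxy : xh ≤ yh)
    (i : Fin n) : d x w yh wh i ≤ d x w xh wh i := by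
  obtain ⟨-, -, -, hanti, -⟩ := hd
  exact monotoneOn_Icc_of_update_s7 (β := ℝᵒᵈ) (f := fun xh => OrderDual.toDual (d x w xh wh i))
    (fun j z _ s t _ hst _ => hanti i j x z s t hst w hw wh hwh) ⟨le_rfl, hxy⟩ ⟨hxy, le_rfl⟩ hxy

theorem apply_le_apply_swap (hd : IsDecompositionFunction wl wu F d) (hwlu : wl ≤ wu)
    (x xh : Fin n → ℝ) : d x wl xh wu ≤ d x wu xh wl := by
  obtain ⟨-, -, -, -, hmono, hanti⟩ := hd
  have hwl : wl ∈ Icc wl wu := ⟨le_rfl, hwlu⟩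
  have hwu : wu ∈ Icc wl wu := ⟨hwlu, le_rfl⟩
  intro i
  calc d x wl xh wu i ≤ d x wu xh wu i :=
        monotoneOn_Icc_of_update_s7 (f := fun w => d x w xh wu i)
          (fun k w hw s t hs hst ht => hmono i k x xh s t hs hst ht w hw wu hwu) hwl hwu hwlu
    _ ≤ d x wu xh wl i :=
        monotoneOn_Icc_of_update_s7 (β := ℝᵒᵈ) (f := fun wh => OrderDual.toDual (d x wu xh wh i))
          (fun k wh hwh s t hs hst ht => hanti i k x xh s t hs hst ht wu hwu wh hwh) hwl hwu hwlu

end IsDecompositionFunction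

section Embedding

variable {n m : ℕ}

/-- The embedding vector field in the coordinates `Sum.elim x (-x̂)`, which turn the southeast
order into the componentwise order. -/
def embeddingField (d : (Fin n → ℝ) → (Fin m → ℝ) → (Fin n → ℝ) → (Fin m → ℝ) → (Fin n → ℝ))
    (wl wu : Fin m → ℝ) (X : Fin n ⊕ Fin n → ℝ) : Fin n ⊕ Fin n → ℝ :=
  Sum.elim (d (X ∘ Sum.inl) wl (-(X ∘ Sum.inr)) wu) (-d (-(X ∘ Sum.inr)) wu (X ∘ Sum.inl) wl)

variable {wl wu : Fin m → ℝ} {F : (Fin n → ℝ) → (Fin m → ℝ) → (Fin n → ℝ)}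
  {d : (Fin n → ℝ) → (Fin m → ℝ) → (Fin n → ℝ) → (Fin m → ℝ) → (Fin n → ℝ)}

@[simp]
theorem embeddingField_sumElim (x xh : Fin n → ℝ) :
    embeddingField d wl wu (Sum.elim x (-xh)) = Sum.elim (d x wl xh wu) (-d xh wu x wl) := by
  simp [embeddingField]

theorem IsDecompositionFunction.cooperative_embeddingField
    (hd : IsDecompositionFunction wl wu F d) (hwlu : wl ≤ wu) :
    Cooperative (embeddingField d wl wu) := by
  have hwl : wl ∈ Icc wl wu := ⟨le_rfl, hwlu⟩
  have hwu : wu ∈ Icc wl wu := ⟨hwlu, le_rfl⟩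
  intro X Y hXY k hk
  have hl : X ∘ Sum.inl ≤ Y ∘ Sum.inl := fun i => hXY (Sum.inl i)
  have hr : -(Y ∘ Sum.inr) ≤ -(X ∘ Sum.inr) := fun i => neg_le_neg (hXY (Sum.inr i))
  cases k with
  | inl i =>
    calc d (X ∘ Sum.inl) wl (-(X ∘ Sum.inr)) wu i
        ≤ d (Y ∘ Sum.inl) wl (-(X ∘ Sum.inr)) wu i := hd.apply_le_apply_of_le_of_eq hwl hwu hl hk
      _ ≤ d (Y ∘ Sum.inl) wl (-(Y ∘ Sum.inr)) wu i := hd.apply_le_apply_of_le_right hwl hwu hr i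
  | inr i =>
    refine neg_le_neg ?_
    calc d (-(Y ∘ Sum.inr)) wu (Y ∘ Sum.inl) wl i
        ≤ d (-(X ∘ Sum.inr)) wu (Y ∘ Sum.inl) wl i :=
          hd.apply_le_apply_of_le_of_eq hwu hwl hr (by simp [hk])
      _ ≤ d (-(X ∘ Sum.inr)) wu (X ∘ Sum.inl) wl i := hd.apply_le_apply_of_le_right hwu hwl hl i

theorem IsDecompositionFunction.locallyLipschitz_embeddingField
    (hd : IsDecompositionFunction wl wu F d) : LocallyLipschitz (embeddingField d wl wu) := by
  let e := IsometryEquiv.sumArrowIsometryEquivProdArrow (α := Fin n) (β := Fin n) (γ := ℝ)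
  have hfst : LocallyLipschitz fun p : (Fin n → ℝ) × (Fin n → ℝ) => (p.1, wl) :=
    LipschitzWith.prod_fst.locallyLipschitz.prodMk (LocallyLipschitz.const wl)
  have hsnd : LocallyLipschitz fun p : (Fin n → ℝ) × (Fin n → ℝ) => (-p.2, wu) :=
    LipschitzWith.prod_snd.neg.locallyLipschitz.prodMk (LocallyLipschitz.const wu)
  have hE : LocallyLipschitz fun p : (Fin n → ℝ) × (Fin n → ℝ) =>
      (d p.1 wl (-p.2) wu, -d (-p.2) wu p.1 wl) :=
    (hd.1.comp (hfst.prodMk hsnd)).prodMk (hd.1.comp (hsnd.prodMk hfst)).neg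
  have hfactor : embeddingField d wl wu =
      e.symm ∘ (fun p => (d p.1 wl (-p.2) wu, -d (-p.2) wu p.1 wl)) ∘ e := by
    funext X k
    cases k <;> rfl
  rw [hfactor]
  exact e.symm.isometry.lipschitz.locallyLipschitz.comp
    (hE.comp e.isometry.lipschitz.locallyLipschitz)

theorem IsDecompositionFunction.le_of_hasDerivAt (hd : IsDecompositionFunction wl wu F d)
    (hwlu : wl ≤ wu) {a ah : ℝ → Fin n → ℝ} {t₀ : ℝ}
    (ha : ∀ t ∈ Ici t₀, HasDerivAt a (d (a t) wl (ah t) wu) t)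
    (hah : ∀ t ∈ Ici t₀, HasDerivAt ah (d (ah t) wu (a t) wl) t) (h₀ : a t₀ ≤ ah t₀) :
    ∀ t ∈ Ici t₀, a t ≤ ah t := fun t ht =>
  -- `(â, a)` is a supersolution, by the monotonicity of `d` in the disturbances
  (sumElim_neg_le_sumElim_neg_iff.1 <| (hd.cooperative_embeddingField hwlu).le_of_hasDerivAt
    hd.locallyLipschitz_embeddingField
    (fun s hs => hasDerivAt_sumElim_neg (ha s hs.1) (hah s hs.1))
    (fun s hs => hasDerivAt_sumElim_neg (hah s hs.1) (ha s hs.1))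
    (fun s _ => (embeddingField_sumElim _ _).ge)
    (fun s _ => by
      rw [embeddingField_sumElim]
      exact sumElim_neg_le_sumElim_neg_iff.2
        ⟨hd.apply_le_apply_swap hwlu _ _, hd.apply_le_apply_swap hwlu _ _⟩)
    (sumElim_neg_le_sumElim_neg_iff.2 ⟨h₀, h₀⟩) t ⟨ht, le_rfl⟩).1

end Embedding

/-- Theorem 1, Part 2: a solution of the deterministic embedding ODE started
in `𝒮` converges to a limit `(x_eq, x̂_eq)` which is an equilibrium of the embedding system
(`e(x_eq, x̂_eq) = 0`), and `a(0) ⪯ x_eq ⪯ x̂_eq ⪯ â(0)`. -/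
theorem thm1_part2_limit_is_equilibrium
    {n m : ℕ} (wl wu : Fin m → ℝ) (hwlu : wl ≤ wu)
    (F : (Fin n → ℝ) → (Fin m → ℝ) → (Fin n → ℝ))
    (d : (Fin n → ℝ) → (Fin m → ℝ) → (Fin n → ℝ) → (Fin m → ℝ) → (Fin n → ℝ))
    (hd : IsDecompositionFunction wl wu F d)
    -- (a, ah) solves the deterministic embedding ODE on [0, ∞)
    (a ah : ℝ → (Fin n → ℝ))
    (ha : ∀ t ∈ Set.Ici (0:ℝ), HasDerivAt a (d (a t) wl (ah t) wu) t)
    (hah : ∀ t ∈ Set.Ici (0:ℝ), HasDerivAt ah (d (ah t) wu (a t) wl) t)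
    -- (a 0, ah 0) ∈ 𝒮
    (h0tri : a 0 ≤ ah 0)
    (h0SE : (0 : Fin n → ℝ) ≤ d (a 0) wl (ah 0) wu ∧ d (ah 0) wu (a 0) wl ≤ (0 : Fin n → ℝ)) :
    ∃ xeq xheq : Fin n → ℝ,
      Filter.Tendsto a Filter.atTop (nhds xeq) ∧
      Filter.Tendsto ah Filter.atTop (nhds xheq) ∧
      d xeq wl xheq wu = 0 ∧ d xheq wu xeq wl = 0 ∧
      a 0 ≤ xeq ∧ xeq ≤ xheq ∧ xheq ≤ ah 0 := by
  have hG := hd.cooperative_embeddingField hwlu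
  have hGL := hd.locallyLipschitz_embeddingField
  set X : ℝ → Fin n ⊕ Fin n → ℝ := fun t => Sum.elim (a t) (-ah t) with hXdef
  have hX : ∀ t ∈ Ici 0, HasDerivAt X (embeddingField d wl wu (X t)) t := fun t ht => by
    simpa only [hXdef, embeddingField_sumElim] using hasDerivAt_sumElim_neg (ha t ht) (hah t ht)
  have hmono : MonotoneOn X (Ici 0) := monotoneOn_Ici_of_hasDerivAt_nonneg hX <|
    hG.nonneg_of_nonneg hGL hX (by simpa [hXdef, Pi.le_def, Sum.forall] using h0SE)
  have hle := hd.le_of_hasDerivAt hwlu ha hah h0tri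
  obtain ⟨Xeq, hlim, hXeq⟩ := hmono.exists_tendsto_atTop_of_le (B := Sum.elim (ah 0) (-a 0))
    fun t ht => by
      obtain ⟨ha0t, haht0⟩ := sumElim_neg_le_sumElim_neg_iff.1 (hmono self_mem_Ici ht ht)
      exact sumElim_neg_le_sumElim_neg_iff.2 ⟨(hle t ht).trans haht0, ha0t.trans (hle t ht)⟩
  have heq := eq_zero_of_tendsto_of_hasDerivAt (eventually_atTop.2 ⟨0, hX⟩) hlim
    ((hGL.continuous.tendsto Xeq).comp hlim)
  obtain ⟨xeq, xheq, rfl⟩ : ∃ x xh, Xeq = Sum.elim x (-xh) :=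
    ⟨Xeq ∘ Sum.inl, -(Xeq ∘ Sum.inr), by simp⟩
  rw [embeddingField_sumElim] at heq
  obtain ⟨ha_lim, hah_lim⟩ := tendsto_sumElim_neg_iff.1 hlim
  obtain ⟨ha0, hah0⟩ := sumElim_neg_le_sumElim_neg_iff.1 (hXeq 0 self_mem_Ici)
  exact ⟨xeq, xheq, ha_lim, hah_lim, funext fun i => congrFun heq (.inl i),
    funext fun i => neg_eq_zero.1 (congrFun heq (.inr i)), ha0,
    le_of_tendsto_of_tendsto ha_lim hah_lim (eventually_atTop.2 ⟨0, hle⟩), hah0⟩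
end

section
/- (Corollary 1) Suppose F is mixed-monotone with respect to a decomposition function d, and suppose (x_eq, x̂_eq) with x_eq ⪯ x̂_eq is an asymptotically stable equilibrium of the deterministic embedding system (ẋ, ẋ̂) = e(x, x̂) whose basin of attraction is 𝒞 ⊆ ℝⁿ × ℝⁿ. Then [x_eq, x̂_eq] is robustly forward invariant for ẋ = F(x, w), and for every (a, â) ∈ 𝒞 with a ⪯ â, the set [x_eq, x̂_eq] is attractive from [a, â]: for every solution x : [0, ∞) → ℝⁿ of ẋ = F(x, w(t)) under a piecewise continuous disturbance valued in 𝒲 with x(0) ∈ [a, â], and every open set U ⊇ [x_eq, x̂_eq], there exists T > 0 with x(t) ∈ U for all t ≥ T. In particular, if 𝒞 contains the whole upper triangle {(a, â) : a ⪯ â}, then [x_eq, x̂_eq] is globally attractive for ẋ = F(x, w). -/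
/-!
If `(a, â)` solves the embedding system and `a(0) ⪯ x(0) ⪯ â(0)`, then `a(t) ⪯ x(t) ⪯ â(t)` for
all `t ≥ 0`: by the monotonicity properties of `d`, whenever `xᵢ` reaches `aᵢ` (or `âᵢ`), its
velocity `Fᵢ(x, w)` is at least `dᵢ(a, w̲, â, w̄)` (at most `dᵢ(â, w̄, a, w̲)`), so the trajectory cannot
leave the moving box `[a, â]`. To make this exit condition strict, the box is inflated by
`ε e^{(L+1)t}` with `L` a Lipschitz constant of `d` near the embedding trajectory; the inflated
claim follows by continuous induction, and then `ε → 0`.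

Comparing with the constant solution at the equilibrium gives invariance of `[x_eq, x̂_eq]`;
comparing with the solution from a point of the basin squeezes `x(t)` between `a(t) → x_eq` and
`â(t) → x̂_eq`, which gives attractivity.
-/

open Set Function Filter Topology

/-- A global-in-forward-time solution of the deterministic embedding system
`(ẋ, ẋ̂) = e(x, x̂) = (d(x, w̲, x̂, w̄), d(x̂, w̄, x, w̲))`. -/
def EmbeddingSol {n m : ℕ} (wl wu : Fin m → ℝ)
    (d : (Fin n → ℝ) → (Fin m → ℝ) → (Fin n → ℝ) → (Fin m → ℝ) → (Fin n → ℝ))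
    (a ah : ℝ → (Fin n → ℝ)) : Prop :=
  ∀ t ∈ Set.Ici (0:ℝ),
    HasDerivAt a (d (a t) wl (ah t) wu) t ∧ HasDerivAt ah (d (ah t) wu (a t) wl) t

theorem le_of_forall_update_le {ι α β : Type*} [Fintype ι] [DecidableEq ι] [Preorder α]
    [Preorder β] {G : (ι → α) → β} {p q : ι → α} (hpq : p ≤ q)
    (h : ∀ k, ∀ z ∈ Icc p q, G (update z k (p k)) ≤ G (update z k (q k))) : G p ≤ G q := by
  suffices ∀ s : Finset ι, G p ≤ G (s.piecewise q p) by simpa using this Finset.univ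
  intro s
  induction s using Finset.induction_on with
  | empty => simp
  | insert k s hk ih =>
    calc G p ≤ G (s.piecewise q p) := ih
      _ = G (update (s.piecewise q p) k (p k)) := by
        rw [update_eq_self_iff.2 (Finset.piecewise_eq_of_notMem _ _ _ hk).symm]
      _ ≤ G (update (s.piecewise q p) k (q k)) := h k _ (Finset.piecewise_mem_Icc' s hpq)
      _ = G ((insert k s).piecewise q p) := by rw [Finset.piecewise_insert]

namespace IsDecompositionFunction

variable {n m : ℕ} {wl wu : Fin m → ℝ} {F : (Fin n → ℝ) → (Fin m → ℝ) → (Fin n → ℝ)}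
  {d : (Fin n → ℝ) → (Fin m → ℝ) → (Fin n → ℝ) → (Fin m → ℝ) → (Fin n → ℝ)}
  {x y z xh : Fin n → ℝ} {w w' wh wh' : Fin m → ℝ} {i : Fin n}

theorem mono_w (hd : IsDecompositionFunction wl wu F d) (hw : w ∈ Icc wl wu)
    (hw' : w' ∈ Icc wl wu) (hwh : wh ∈ Icc wl wu) (hle : w ≤ w') :
    d x w xh wh i ≤ d x w' xh wh i :=
  le_of_forall_update_le (G := fun v => d x v xh wh i) hle fun k z hz =>
    hd.2.2.2.2.1 i k x xh _ _ (hw.1 k) (hle k) (hw'.2 k) z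
      ⟨hw.1.trans hz.1, hz.2.trans hw'.2⟩ wh hwh

theorem anti_wh (hd : IsDecompositionFunction wl wu F d) (hw : w ∈ Icc wl wu)
    (hwh : wh ∈ Icc wl wu) (hwh' : wh' ∈ Icc wl wu) (hle : wh ≤ wh') :
    d x w xh wh' i ≤ d x w xh wh i :=
  le_of_forall_update_le (β := ℝᵒᵈ) (G := fun v => OrderDual.toDual (d x w xh v i)) hle
    fun k z hz => hd.2.2.2.2.2 i k x xh _ _ (hwh.1 k) (hle k) (hwh'.2 k) w hw z
      ⟨hwh.1.trans hz.1, hz.2.trans hwh'.2⟩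

theorem anti_xh (hd : IsDecompositionFunction wl wu F d) (hw : w ∈ Icc wl wu)
    (hwh : wh ∈ Icc wl wu) (hle : xh ≤ y) : d x w y wh i ≤ d x w xh wh i :=
  le_of_forall_update_le (β := ℝᵒᵈ) (G := fun v => OrderDual.toDual (d x w v wh i)) hle
    fun k z _ => hd.2.2.2.1 i k x z _ _ (hle k) w hw wh hwh

theorem mono_x_of_eq (hd : IsDecompositionFunction wl wu F d) (hw : w ∈ Icc wl wu)
    (hwh : wh ∈ Icc wl wu) (hle : x ≤ y) (hi : x i = y i) : d x w xh wh i ≤ d y w xh wh i :=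
  le_of_forall_update_le (G := fun v => d v w xh wh i) hle fun k z _ => by
    rcases eq_or_ne k i with rfl | hk
    · rw [hi]
    · exact hd.2.2.1 i k hk z xh _ _ (hle k) w hw wh hwh

theorem lower_le_apply (hd : IsDecompositionFunction wl wu F d) (hwlu : wl ≤ wu)
    (hw : w ∈ Icc wl wu) (hyx : y ≤ x) (hi : y i = x i) (hxz : x ≤ z) :
    d y wl z wu i ≤ F x w i := by
  have hwl : wl ∈ Icc wl wu := left_mem_Icc.2 hwlu
  have hwu : wu ∈ Icc wl wu := right_mem_Icc.2 hwlu
  calc d y wl z wu i ≤ d x wl z wu i := hd.mono_x_of_eq hwl hwu hyx hi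
    _ ≤ d x wl x wu i := hd.anti_xh hwl hwu hxz
    _ ≤ d x wl x w i := hd.anti_wh hwl hw hwu hw.2
    _ ≤ d x w x w i := hd.mono_w hwl hw hw hw.1
    _ = F x w i := congrFun (hd.2.1 x w hw) i

theorem apply_le_upper (hd : IsDecompositionFunction wl wu F d) (hwlu : wl ≤ wu)
    (hw : w ∈ Icc wl wu) (hxy : x ≤ y) (hi : x i = y i) (hzx : z ≤ x) :
    F x w i ≤ d y wu z wl i := by
  have hwl : wl ∈ Icc wl wu := left_mem_Icc.2 hwlu
  have hwu : wu ∈ Icc wl wu := right_mem_Icc.2 hwlu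
  calc F x w i = d x w x w i := (congrFun (hd.2.1 x w hw) i).symm
    _ ≤ d x wu x w i := hd.mono_w hw hwu hw hw.2
    _ ≤ d x wu x wl i := hd.anti_wh hwu hwl hw hw.1
    _ ≤ d x wu z wl i := hd.anti_xh hwu hwl hzx
    _ ≤ d y wu z wl i := hd.mono_x_of_eq hwu hwl hxy hi

end IsDecompositionFunction

section Metric

variable {ι : Type*} [Fintype ι]

theorem dist_inf_le_of_sub_le {x a : ι → ℝ} {r : ℝ} (hr : 0 ≤ r) (h : a - (fun _ => r) ≤ x) :
    dist (x ⊓ a) a ≤ r :=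
  (dist_pi_le_iff hr).2 fun j => by
    have hj : a j - r ≤ x j := h j
    rw [Pi.inf_apply, Real.dist_eq, abs_le]
    constructor <;> linarith [min_le_right (x j) (a j), le_min hj (by linarith : a j - r ≤ a j)]

theorem dist_sup_le_of_le_add {x a : ι → ℝ} {r : ℝ} (hr : 0 ≤ r) (h : x ≤ a + fun _ => r) :
    dist (x ⊔ a) a ≤ r :=
  (dist_pi_le_iff hr).2 fun j => by
    have hj : x j ≤ a j + r := h j
    rw [Pi.sup_apply, Real.dist_eq, abs_le]
    constructor <;> linarith [le_max_right (x j) (a j), max_le hj (by linarith : a j ≤ a j + r)]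

theorem dist_sup_inf_le (l l' h h' x : ι → ℝ) :
    dist (l ⊔ x ⊓ h) (l' ⊔ x ⊓ h') ≤ max (dist l l') (dist h h') :=
  (dist_pi_le_iff (le_max_of_le_left dist_nonneg)).2 fun j => by
    simp only [Pi.sup_apply, Pi.inf_apply, Real.dist_eq]
    refine (abs_max_sub_max_le_max _ _ _ _).trans (max_le_max ?_ ?_)
    · simpa only [Real.dist_eq] using dist_le_pi_dist l l' j
    · refine (abs_min_sub_min_le_max _ _ _ _).trans (max_le (by simp [dist_nonneg]) ?_)
      simpa only [Real.dist_eq] using dist_le_pi_dist h h' j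

end Metric

theorem LocallyLipschitz.exists_forall_dist_le {α β : Type*} [PseudoMetricSpace α]
    [ProperSpace α] [PseudoMetricSpace β] {f : α → β} (hf : LocallyLipschitz f) {S : Set α}
    (hS : IsCompact S) :
    ∃ L, 0 ≤ L ∧ ∀ q ∈ S, ∀ p r, dist p q ≤ r → r ≤ 1 → dist (f p) (f q) ≤ L * r := by
  obtain ⟨K, hK⟩ :=
    hf.locallyLipschitzOn.exists_lipschitzOnWith_of_compact (hS.cthickening (r := 1))
  refine ⟨K, K.2, fun q hq p r hpq hr => ?_⟩
  calc dist (f p) (f q)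
      ≤ K * dist p q := hK.dist_le_mul p
        (Metric.mem_cthickening_of_dist_le p q 1 S hq (hpq.trans hr)) q
        (Metric.self_subset_cthickening S hq)
    _ ≤ K * r := by gcongr

namespace IsDecompositionFunction

variable {n m : ℕ} {wl wu : Fin m → ℝ} {F : (Fin n → ℝ) → (Fin m → ℝ) → (Fin n → ℝ)}
  {d : (Fin n → ℝ) → (Fin m → ℝ) → (Fin n → ℝ) → (Fin m → ℝ) → (Fin n → ℝ)}
  {x a ah : Fin n → ℝ} {w : Fin m → ℝ} {i : Fin n} {r L : ℝ}

theorem sub_le_apply_of_eq_sub (hd : IsDecompositionFunction wl wu F d) (hwlu : wl ≤ wu)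
    (hw : w ∈ Icc wl wu) (hr : 0 ≤ r) (hx : x ∈ Icc (a - fun _ => r) (ah + fun _ => r))
    (hi : x i = a i - r)
    (hL : ∀ y z, dist y a ≤ r → dist z ah ≤ r → dist (d y wl z wu) (d a wl ah wu) ≤ L * r) :
    d a wl ah wu i - L * r ≤ F x w i := by
  have hP := (dist_le_pi_dist _ _ i).trans
    (hL _ _ (dist_inf_le_of_sub_le hr hx.1) (dist_sup_le_of_le_add hr hx.2))
  rw [Real.dist_eq, abs_le] at hP
  calc d a wl ah wu i - L * r ≤ d (x ⊓ a) wl (x ⊔ ah) wu i := by linarith [hP.1]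
    _ ≤ F x w i := hd.lower_le_apply hwlu hw inf_le_left
        (inf_eq_left.2 (by linarith : x i ≤ a i)) le_sup_left

theorem apply_le_add_of_eq_add (hd : IsDecompositionFunction wl wu F d) (hwlu : wl ≤ wu)
    (hw : w ∈ Icc wl wu) (hr : 0 ≤ r) (hx : x ∈ Icc (a - fun _ => r) (ah + fun _ => r))
    (hi : x i = ah i + r)
    (hL : ∀ y z, dist y ah ≤ r → dist z a ≤ r → dist (d y wu z wl) (d ah wu a wl) ≤ L * r) :
    F x w i ≤ d ah wu a wl i + L * r := by
  have hP := (dist_le_pi_dist _ _ i).trans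
    (hL _ _ (dist_sup_le_of_le_add hr hx.2) (dist_inf_le_of_sub_le hr hx.1))
  rw [Real.dist_eq, abs_le] at hP
  calc F x w i ≤ d (x ⊔ ah) wu (x ⊓ a) wl i := hd.apply_le_upper hwlu hw le_sup_left
        (sup_eq_left.2 (by linarith : ah i ≤ x i)).symm inf_le_left
    _ ≤ d ah wu a wl i + L * r := by linarith [hP.2]

end IsDecompositionFunction

theorem eventually_nonneg_nhdsGT_of_hasDerivAt {φ : ℝ → ℝ} {φ' t : ℝ} (hφ : HasDerivAt φ φ' t)
    (h0 : 0 ≤ φ t) (hpos : φ t = 0 → 0 < φ') : ∀ᶠ u in 𝓝[>] t, 0 ≤ φ u := by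
  rcases h0.eq_or_lt with h | h
  · have hslope : ∀ᶠ u in 𝓝[>] t, 0 < slope φ t u :=
      ((hasDerivAt_iff_tendsto_slope.1 hφ).mono_left
        (nhdsWithin_mono _ fun _ hu => ne_of_gt hu)).eventually (lt_mem_nhds (hpos h.symm))
    filter_upwards [hslope, self_mem_nhdsWithin] with u hu htu
    exact h.le.trans ((slope_pos_iff_of_le (le_of_lt htu)).1 hu).le
  · exact ((hφ.continuousAt.eventually (lt_mem_nhds h)).filter_mono nhdsWithin_le_nhds).mono
      fun _ => le_of_lt

theorem mem_Icc_of_inward_at_boundary {ι : Type*} [Fintype ι] {lo x hi lo' x' hi' : ℝ → ι → ℝ}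
    {T : ℝ} (hlo : ∀ t ∈ Icc 0 T, HasDerivAt lo (lo' t) t)
    (hx : ∀ t ∈ Icc 0 T, HasDerivAt x (x' t) t) (hhi : ∀ t ∈ Icc 0 T, HasDerivAt hi (hi' t) t)
    (h0 : x 0 ∈ Icc (lo 0) (hi 0))
    (hlow : ∀ t ∈ Ico 0 T, x t ∈ Icc (lo t) (hi t) → ∀ i, x t i = lo t i → lo' t i < x' t i)
    (hup : ∀ t ∈ Ico 0 T, x t ∈ Icc (lo t) (hi t) → ∀ i, x t i = hi t i → x' t i < hi' t i) :
    ∀ t ∈ Icc 0 T, x t ∈ Icc (lo t) (hi t) := by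
  have hcont : ∀ {f f' : ℝ → ι → ℝ}, (∀ t ∈ Icc 0 T, HasDerivAt f (f' t) t) →
      ContinuousOn f (Icc 0 T) :=
    fun hf t ht => (hf t ht).continuousAt.continuousWithinAt
  have hclosed : IsClosed ({t | x t ∈ Icc (lo t) (hi t)} ∩ Icc 0 T) := by
    convert (isClosed_Icc.isClosed_le (hcont hlo) (hcont hx)).inter
      (isClosed_Icc.isClosed_le (hcont hx) (hcont hhi)) using 1
    ext t
    simp only [mem_inter_iff, mem_ofPred_eq, mem_Icc]
    tauto
  refine fun t ht => hclosed.Icc_subset_of_forall_mem_nhdsWithin h0 ?_ ht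
  rintro t ⟨hts, ht⟩
  have htI := Ico_subset_Icc_self ht
  have hlow_ev : ∀ i, ∀ᶠ u in 𝓝[>] t, 0 ≤ x u i - lo u i := fun i =>
    eventually_nonneg_nhdsGT_of_hasDerivAt
      ((hasDerivAt_pi.1 (hx t htI) i).sub (hasDerivAt_pi.1 (hlo t htI) i))
      (sub_nonneg.2 (hts.1 i)) fun h => sub_pos.2 (hlow t ht hts i (sub_eq_zero.1 h))
  have hup_ev : ∀ i, ∀ᶠ u in 𝓝[>] t, 0 ≤ hi u i - x u i := fun i =>
    eventually_nonneg_nhdsGT_of_hasDerivAt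
      ((hasDerivAt_pi.1 (hhi t htI) i).sub (hasDerivAt_pi.1 (hx t htI) i))
      (sub_nonneg.2 (hts.2 i)) fun h => sub_pos.2 (hup t ht hts i (sub_eq_zero.1 h).symm)
  filter_upwards [eventually_all.2 hlow_ev, eventually_all.2 hup_ev] with u hl hu
  exact ⟨fun i => sub_nonneg.1 (hl i), fun i => sub_nonneg.1 (hu i)⟩

theorem mem_Icc_of_forall_mem_Icc_sub_add {ι : Type*} {x a b : ι → ℝ} {k ε₀ : ℝ} (hε₀ : 0 < ε₀)
    (h : ∀ ε ∈ Ioc 0 ε₀, x ∈ Icc (a - fun _ => ε * k) (b + fun _ => ε * k)) : x ∈ Icc a b := by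
  have hev : ∀ᶠ ε in 𝓝[>] 0, x ∈ Icc (a - fun _ => ε * k) (b + fun _ => ε * k) :=
    mem_of_superset (Ioc_mem_nhdsGT hε₀) h
  have hshift : Tendsto (fun ε : ℝ => fun _ : ι => ε * k) (𝓝[>] 0) (𝓝 0) :=
    tendsto_nhdsWithin_of_tendsto_nhds
      (tendsto_pi_nhds.2 fun _ => (continuous_mul_const k).tendsto' 0 0 (zero_mul k))
  exact ⟨le_of_tendsto (by simpa using tendsto_const_nhds.sub hshift) (hev.mono fun _ h => h.1),
    ge_of_tendsto (by simpa using tendsto_const_nhds.add hshift) (hev.mono fun _ h => h.2)⟩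

theorem eventually_mem_of_tendsto_of_mem_Icc {ι α : Type*} [Fintype ι] {l : Filter α}
    {a b x : α → ι → ℝ} {p q : ι → ℝ} (hpq : p ≤ q) (ha : Tendsto a l (𝓝 p))
    (hb : Tendsto b l (𝓝 q)) (hx : ∀ᶠ t in l, x t ∈ Icc (a t) (b t)) {U : Set (ι → ℝ)}
    (hU : IsOpen U) (hpqU : Icc p q ⊆ U) : ∀ᶠ t in l, x t ∈ U := by
  obtain ⟨δ, hδ, hδU⟩ := isCompact_Icc.exists_thickening_subset_open hU hpqU
  filter_upwards [hx, ha (Metric.ball_mem_nhds p hδ), hb (Metric.ball_mem_nhds q hδ)]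
    with t hxt hat hbt
  refine hδU (Metric.mem_thickening_iff.2 ⟨p ⊔ x t ⊓ q, ⟨le_sup_left, sup_le hpq inf_le_right⟩, ?_⟩)
  -- `x t` is its own clamp to `[a t, b t]`, and clamping is 1-Lipschitz in the bounds.
  calc dist (x t) (p ⊔ x t ⊓ q) = dist (a t ⊔ x t ⊓ b t) (p ⊔ x t ⊓ q) := by
        rw [inf_eq_left.2 hxt.2, sup_eq_right.2 hxt.1]
    _ ≤ max (dist (a t) p) (dist (b t) q) := dist_sup_inf_le _ _ _ _ _
    _ < δ := max_lt hat hbt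

namespace EmbeddingSol

variable {n m : ℕ} {wl wu : Fin m → ℝ} {F : (Fin n → ℝ) → (Fin m → ℝ) → (Fin n → ℝ)}
  {d : (Fin n → ℝ) → (Fin m → ℝ) → (Fin n → ℝ) → (Fin m → ℝ) → (Fin n → ℝ)}
  {a ah x : ℝ → (Fin n → ℝ)} {w : ℝ → (Fin m → ℝ)}

theorem mem_Icc_add_exp {T L ε : ℝ} (hwlu : wl ≤ wu) (hd : IsDecompositionFunction wl wu F d)
    (hsol : EmbeddingSol wl wu d a ah) (hw : ∀ t ∈ Icc (0:ℝ) T, w t ∈ Icc wl wu)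
    (hx : ∀ t ∈ Icc (0:ℝ) T, HasDerivAt x (F (x t) (w t)) t) (h0 : x 0 ∈ Icc (a 0) (ah 0))
    (hL0 : 0 ≤ L)
    (hLa : ∀ t ∈ Icc (0:ℝ) T, ∀ r ≤ 1, ∀ y z, dist y (a t) ≤ r → dist z (ah t) ≤ r →
      dist (d y wl z wu) (d (a t) wl (ah t) wu) ≤ L * r)
    (hLah : ∀ t ∈ Icc (0:ℝ) T, ∀ r ≤ 1, ∀ y z, dist y (ah t) ≤ r → dist z (a t) ≤ r →
      dist (d y wu z wl) (d (ah t) wu (a t) wl) ≤ L * r)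
    (hε : 0 < ε) (hεT : ε ≤ Real.exp (-((L + 1) * T))) :
    ∀ t ∈ Icc (0:ℝ) T, x t ∈ Icc (a t - fun _ => ε * Real.exp ((L + 1) * t))
      (ah t + fun _ => ε * Real.exp ((L + 1) * t)) := by
  set c := L + 1 with hc
  have he : ∀ t, HasDerivAt (fun t => fun _ : Fin n => ε * Real.exp (c * t))
      (fun _ => c * (ε * Real.exp (c * t))) t := fun t => hasDerivAt_pi.2 fun _ => by
    have h := ((hasDerivAt_id t).const_mul c).exp.const_mul ε
    simp only [id, mul_one] at h
    exact h.congr_deriv (by ring)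
  have he1 : ∀ t ∈ Icc (0:ℝ) T, ε * Real.exp (c * t) ≤ 1 := fun t ht => by
    calc ε * Real.exp (c * t) ≤ Real.exp (-(c * T)) * Real.exp (c * T) := by
          gcongr
          exact ht.2
      _ = 1 := by rw [← Real.exp_add, neg_add_cancel, Real.exp_zero]
  refine mem_Icc_of_inward_at_boundary (fun t ht => (hsol t ht.1).1.sub (he t)) hx
    (fun t ht => (hsol t ht.1).2.add (he t)) ?_ ?_ ?_
  · have : 0 ≤ ε * Real.exp (c * 0) := by positivity
    exact ⟨fun i => by simp only [Pi.sub_apply]; linarith [h0.1 i],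
      fun i => by simp only [Pi.add_apply]; linarith [h0.2 i]⟩
  · intro t ht hxt i hi
    have htI := Ico_subset_Icc_self ht
    have hbound := hd.sub_le_apply_of_eq_sub hwlu (hw t htI) (by positivity) hxt hi
      (hLa t htI _ (he1 t htI))
    have : 0 < ε * Real.exp (c * t) := by positivity
    simp only [Pi.sub_apply]
    linarith
  · intro t ht hxt i hi
    have htI := Ico_subset_Icc_self ht
    have hbound := hd.apply_le_add_of_eq_add hwlu (hw t htI) (by positivity) hxt hi
      (hLah t htI _ (he1 t htI))
    have : 0 < ε * Real.exp (c * t) := by positivity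
    simp only [Pi.add_apply]
    linarith

theorem mem_Icc {T : ℝ} (hwlu : wl ≤ wu) (hd : IsDecompositionFunction wl wu F d)
    (hsol : EmbeddingSol wl wu d a ah) (hw : ∀ t ∈ Icc (0:ℝ) T, w t ∈ Icc wl wu)
    (hx : ∀ t ∈ Icc (0:ℝ) T, HasDerivAt x (F (x t) (w t)) t) (h0 : x 0 ∈ Icc (a 0) (ah 0)) :
    ∀ t ∈ Icc (0:ℝ) T, x t ∈ Icc (a t) (ah t) := by
  have hca : ContinuousOn a (Icc 0 T) := fun t ht =>
    (hsol t ht.1).1.continuousAt.continuousWithinAt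
  have hcah : ContinuousOn ah (Icc 0 T) := fun t ht =>
    (hsol t ht.1).2.continuousAt.continuousWithinAt
  obtain ⟨L, hL0, hL⟩ := hd.1.exists_forall_dist_le
    ((isCompact_Icc.image_of_continuousOn (f := fun t => ((a t, wl), (ah t, wu)))
      ((hca.prodMk continuousOn_const).prodMk (hcah.prodMk continuousOn_const))).union
    (isCompact_Icc.image_of_continuousOn (f := fun t => ((ah t, wu), (a t, wl)))
      ((hcah.prodMk continuousOn_const).prodMk (hca.prodMk continuousOn_const))))
  intro t ht
  refine mem_Icc_of_forall_mem_Icc_sub_add (Real.exp_pos _) fun ε hε =>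
    hsol.mem_Icc_add_exp hwlu hd hw hx h0 hL0 ?_ ?_ hε.1 hε.2 t ht
  · intro s hs r hr y z hy hz
    exact hL _ (Or.inl ⟨s, hs, rfl⟩) ((y, wl), (z, wu)) r
      (by simp [Prod.dist_eq, hy, hz]) hr
  · intro s hs r hr y z hy hz
    exact hL _ (Or.inr ⟨s, hs, rfl⟩) ((y, wu), (z, wl)) r
      (by simp [Prod.dist_eq, hy, hz]) hr

theorem eventually_mem (hwlu : wl ≤ wu) (hd : IsDecompositionFunction wl wu F d)
    (hsol : EmbeddingSol wl wu d a ah) {p q : Fin n → ℝ} (hpq : p ≤ q)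
    (hlim : Tendsto (fun t => (a t, ah t)) atTop (𝓝 (p, q)))
    (hw : ∀ t ∈ Ici (0:ℝ), w t ∈ Icc wl wu) (hx : ∀ t ∈ Ici (0:ℝ), HasDerivAt x (F (x t) (w t)) t)
    (h0 : x 0 ∈ Icc (a 0) (ah 0)) {U : Set (Fin n → ℝ)} (hU : IsOpen U) (hpqU : Icc p q ⊆ U) :
    ∀ᶠ t in atTop, x t ∈ U :=
  eventually_mem_of_tendsto_of_mem_Icc hpq hlim.fst_nhds hlim.snd_nhds
    ((eventually_ge_atTop 0).mono fun t ht => hsol.mem_Icc hwlu hd (fun s hs => hw s hs.1)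
      (fun s hs => hx s hs.1) h0 t ⟨ht, le_rfl⟩) hU hpqU

end EmbeddingSol

theorem corollary1_asymptotically_stable_equilibrium_general
    {n m : ℕ} (wl wu : Fin m → ℝ) (hwlu : wl ≤ wu)
    (F : (Fin n → ℝ) → (Fin m → ℝ) → (Fin n → ℝ))
    (d : (Fin n → ℝ) → (Fin m → ℝ) → (Fin n → ℝ) → (Fin m → ℝ) → (Fin n → ℝ))
    (hd : IsDecompositionFunction wl wu F d)
    (xeq xheq : Fin n → ℝ) (hle : xeq ≤ xheq)
    -- (xeq, xheq) is an equilibrium of the embedding system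
    (heq : d xeq wl xheq wu = 0 ∧ d xheq wu xeq wl = 0)
    (C : Set ((Fin n → ℝ) × (Fin n → ℝ)))
    -- from every point of the basin 𝒞 a solution exists ...
    (hbasin_ex : ∀ p ∈ C, ∃ a ah : ℝ → (Fin n → ℝ),
      EmbeddingSol wl wu d a ah ∧ a 0 = p.1 ∧ ah 0 = p.2)
    -- ... and every solution starting in 𝒞 converges to the equilibrium
    (hbasin : ∀ a ah : ℝ → (Fin n → ℝ), EmbeddingSol wl wu d a ah → (a 0, ah 0) ∈ C →
      Filter.Tendsto (fun t => (a t, ah t)) Filter.atTop (nhds (xeq, xheq))) :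
    -- [xeq, xheq] is robustly forward invariant for ẋ = F(x, w)
    (∀ T : ℝ, 0 ≤ T →
      ∀ (x : ℝ → (Fin n → ℝ)) (w : ℝ → (Fin m → ℝ)),
        (∀ t ∈ Set.Icc (0:ℝ) T, w t ∈ Set.Icc wl wu) →
        PiecewiseContinuousOn w (Set.Icc 0 T) →
        (∀ t ∈ Set.Icc (0:ℝ) T, HasDerivAt x (F (x t) (w t)) t) →
        x 0 ∈ Set.Icc xeq xheq →
        ∀ t ∈ Set.Icc (0:ℝ) T, x t ∈ Set.Icc xeq xheq) ∧
    -- [xeq, xheq] is attractive from [a, ah] for every (a, ah) ∈ 𝒞 ∩ 𝒯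
    (∀ av ahv : Fin n → ℝ, (av, ahv) ∈ C → av ≤ ahv →
      ∀ (x : ℝ → (Fin n → ℝ)) (w : ℝ → (Fin m → ℝ)),
        (∀ t ∈ Set.Ici (0:ℝ), w t ∈ Set.Icc wl wu) →
        PiecewiseContinuousOn w (Set.Ici 0) →
        (∀ t ∈ Set.Ici (0:ℝ), HasDerivAt x (F (x t) (w t)) t) →
        x 0 ∈ Set.Icc av ahv →
        ∀ U : Set (Fin n → ℝ), IsOpen U → Set.Icc xeq xheq ⊆ U →
          ∃ T : ℝ, 0 < T ∧ ∀ t : ℝ, T ≤ t → x t ∈ U) ∧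
    -- if 𝒯 ⊆ 𝒞 then [xeq, xheq] is globally attractive
    ({p : (Fin n → ℝ) × (Fin n → ℝ) | p.1 ≤ p.2} ⊆ C →
      ∀ (x : ℝ → (Fin n → ℝ)) (w : ℝ → (Fin m → ℝ)),
        (∀ t ∈ Set.Ici (0:ℝ), w t ∈ Set.Icc wl wu) →
        PiecewiseContinuousOn w (Set.Ici 0) →
        (∀ t ∈ Set.Ici (0:ℝ), HasDerivAt x (F (x t) (w t)) t) →
        ∀ U : Set (Fin n → ℝ), IsOpen U → Set.Icc xeq xheq ⊆ U →
          ∃ T : ℝ, 0 < T ∧ ∀ t : ℝ, T ≤ t → x t ∈ U) := by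
  have hconst : EmbeddingSol wl wu d (fun _ => xeq) (fun _ => xheq) := fun t _ =>
    ⟨heq.1 ▸ hasDerivAt_const t xeq, heq.2 ▸ hasDerivAt_const t xheq⟩
  have attract : ∀ p ∈ C, ∀ (x : ℝ → (Fin n → ℝ)) (w : ℝ → (Fin m → ℝ)),
      (∀ t ∈ Ici (0:ℝ), w t ∈ Icc wl wu) → (∀ t ∈ Ici (0:ℝ), HasDerivAt x (F (x t) (w t)) t) →
      x 0 ∈ Icc p.1 p.2 → ∀ U : Set (Fin n → ℝ), IsOpen U → Icc xeq xheq ⊆ U →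
        ∃ T : ℝ, 0 < T ∧ ∀ t : ℝ, T ≤ t → x t ∈ U := by
    intro p hC x w hw hx hx0 U hU hsub
    obtain ⟨a, ah, hsol, ha0, hah0⟩ := hbasin_ex p hC
    have hlim := hbasin a ah hsol (by rwa [ha0, hah0])
    obtain ⟨T, hT⟩ := eventually_atTop.1 ((eventually_gt_atTop 0).and
      (hsol.eventually_mem hwlu hd hle hlim hw hx (ha0 ▸ hah0 ▸ hx0) hU hsub))
    exact ⟨T, (hT T le_rfl).1, fun t ht => (hT t ht).2⟩
  refine ⟨fun T _ x w hw _ hx hx0 => hconst.mem_Icc hwlu hd hw hx hx0,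
    fun av ahv hC _ x w hw _ => attract (av, ahv) hC x w hw, ?_⟩
  intro hTC x w hw _ hx
  exact attract (x 0, x 0) (hTC (show x 0 ≤ x 0 from le_rfl)) x w hw hx ⟨le_rfl, le_rfl⟩

/-- Corollary 1: if `(x_eq, x̂_eq)` (with `x_eq ⪯ x̂_eq`) is an asymptotically
stable equilibrium of the deterministic embedding system with basin of attraction `𝒞`, then
`[x_eq, x̂_eq]` is robustly forward invariant for `ẋ = F(x, w)`, attractive from `[a, â]`
for every `(a, â) ∈ 𝒞` with `a ⪯ â`, and globally attractive when `𝒯 ⊆ 𝒞`. -/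
theorem corollary1_asymptotically_stable_equilibrium
    {n m : ℕ} (wl wu : Fin m → ℝ) (hwlu : wl ≤ wu)
    (F : (Fin n → ℝ) → (Fin m → ℝ) → (Fin n → ℝ))
    (d : (Fin n → ℝ) → (Fin m → ℝ) → (Fin n → ℝ) → (Fin m → ℝ) → (Fin n → ℝ))
    (hd : IsDecompositionFunction wl wu F d)
    (xeq xheq : Fin n → ℝ) (hle : xeq ≤ xheq)
    -- (xeq, xheq) is an equilibrium of the embedding system
    (heq : d xeq wl xheq wu = 0 ∧ d xheq wu xeq wl = 0)
    (C : Set ((Fin n → ℝ) × (Fin n → ℝ)))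
    -- Lyapunov stability of (xeq, xheq) for the embedding system
    (hstab : ∀ U : Set ((Fin n → ℝ) × (Fin n → ℝ)), IsOpen U → (xeq, xheq) ∈ U →
      ∃ V : Set ((Fin n → ℝ) × (Fin n → ℝ)), IsOpen V ∧ (xeq, xheq) ∈ V ∧
        ∀ a ah : ℝ → (Fin n → ℝ), EmbeddingSol wl wu d a ah → (a 0, ah 0) ∈ V →
          ∀ t ∈ Set.Ici (0:ℝ), (a t, ah t) ∈ U)
    -- from every point of the basin 𝒞 a solution exists ...
    (hbasin_ex : ∀ p ∈ C, ∃ a ah : ℝ → (Fin n → ℝ),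
      EmbeddingSol wl wu d a ah ∧ a 0 = p.1 ∧ ah 0 = p.2)
    -- ... and every solution starting in 𝒞 converges to the equilibrium
    (hbasin : ∀ a ah : ℝ → (Fin n → ℝ), EmbeddingSol wl wu d a ah → (a 0, ah 0) ∈ C →
      Filter.Tendsto (fun t => (a t, ah t)) Filter.atTop (nhds (xeq, xheq))) :
    -- [xeq, xheq] is robustly forward invariant for ẋ = F(x, w)
    (∀ T : ℝ, 0 ≤ T →
      ∀ (x : ℝ → (Fin n → ℝ)) (w : ℝ → (Fin m → ℝ)),
        (∀ t ∈ Set.Icc (0:ℝ) T, w t ∈ Set.Icc wl wu) →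
        PiecewiseContinuousOn w (Set.Icc 0 T) →
        (∀ t ∈ Set.Icc (0:ℝ) T, HasDerivAt x (F (x t) (w t)) t) →
        x 0 ∈ Set.Icc xeq xheq →
        ∀ t ∈ Set.Icc (0:ℝ) T, x t ∈ Set.Icc xeq xheq) ∧
    -- [xeq, xheq] is attractive from [a, ah] for every (a, ah) ∈ 𝒞 ∩ 𝒯
    (∀ av ahv : Fin n → ℝ, (av, ahv) ∈ C → av ≤ ahv →
      ∀ (x : ℝ → (Fin n → ℝ)) (w : ℝ → (Fin m → ℝ)),
        (∀ t ∈ Set.Ici (0:ℝ), w t ∈ Set.Icc wl wu) →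
        PiecewiseContinuousOn w (Set.Ici 0) →
        (∀ t ∈ Set.Ici (0:ℝ), HasDerivAt x (F (x t) (w t)) t) →
        x 0 ∈ Set.Icc av ahv →
        ∀ U : Set (Fin n → ℝ), IsOpen U → Set.Icc xeq xheq ⊆ U →
          ∃ T : ℝ, 0 < T ∧ ∀ t : ℝ, T ≤ t → x t ∈ U) ∧
    -- if 𝒯 ⊆ 𝒞 then [xeq, xheq] is globally attractive
    ({p : (Fin n → ℝ) × (Fin n → ℝ) | p.1 ≤ p.2} ⊆ C →
      ∀ (x : ℝ → (Fin n → ℝ)) (w : ℝ → (Fin m → ℝ)),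
        (∀ t ∈ Set.Ici (0:ℝ), w t ∈ Set.Icc wl wu) →
        PiecewiseContinuousOn w (Set.Ici 0) →
        (∀ t ∈ Set.Ici (0:ℝ), HasDerivAt x (F (x t) (w t)) t) →
        ∀ U : Set (Fin n → ℝ), IsOpen U → Set.Icc xeq xheq ⊆ U →
          ∃ T : ℝ, 0 < T ∧ ∀ t : ℝ, T ≤ t → x t ∈ U) :=
  corollary1_asymptotically_stable_equilibrium_general wl wu hwlu F d hd xeq xheq hle heq C
    hbasin_ex hbasin
end
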